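/- arXiv:1006.4732 — 2 statements merged into one kernel-verified Lean document; each statement's English description precedes it below -/
import Mathlib

section
/- Let (M^{2n+1}, φ, ξ, η, g) be an almost α-Kenmotsu manifold whose characteristic vector field ξ belongs to the (κ,μ)'-nullity distribution, and let (φ̄, ξ̄, η̄, ḡ) be the almost (α/β)-Kenmotsu structure obtained by the D-homothetic deformation with positive constant β. Then the deformed curvature satisfies R̄_{XY}ξ = R_{XY}ξ for all vector fields X, Y, and ξ̄ belongs to the (κ̄,μ̄)'-nullity distribution of the deformed structure with κ̄ = κ/β² and μ̄ = μ/β². -/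
/- Common framework: a (2n+1)-dimensional manifold is modelled by an open subset `s`
of Euclidean space; tensor fields are given pointwise (evaluated on constant vector
fields), connections are given by their Christoffel symbols, and covariant
derivatives / curvatures are expressed via `fderiv`. -/

noncomputable section

namespace AKG

open scoped RealInnerProductSpace

abbrev E (m : ℕ) : Type := EuclideanSpace ℝ (Fin m)

variable {V : Type*} [NormedAddCommGroup V] [NormedSpace ℝ V]

/-- A Riemannian metric on `s`, as a pointwise symmetric positive bilinear form. -/
def IsMetricOn (s : Set V) (g : V → V → V → ℝ) : Prop :=
  (∀ u v : V, ContDiffOn ℝ (⊤ : ℕ∞) (fun p => g p u v) s) ∧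
  (∀ p ∈ s, ∀ u v : V, g p u v = g p v u) ∧
  (∀ p ∈ s, ∀ v : V, IsLinearMap ℝ (fun u : V => g p u v)) ∧
  (∀ p ∈ s, ∀ u : V, u ≠ 0 → 0 < g p u u)

/-- A linear connection on `s`, via its Christoffel symbols. -/
def IsConnectionOn (s : Set V) (Γ : V → V → V → V) : Prop :=
  (∀ u v : V, ContDiffOn ℝ (⊤ : ℕ∞) (fun p => Γ p u v) s) ∧
  (∀ p ∈ s, ∀ v : V, IsLinearMap ℝ (fun u : V => Γ p u v)) ∧
  (∀ p ∈ s, ∀ u : V, IsLinearMap ℝ (fun v : V => Γ p u v))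

/-- The Levi-Civita connection of `g` on `s`: torsion-free and metric. -/
def IsLeviCivitaOn (s : Set V) (g : V → V → V → ℝ) (Γ : V → V → V → V) : Prop :=
  IsConnectionOn s Γ ∧
  (∀ p ∈ s, ∀ u v : V, Γ p u v = Γ p v u) ∧
  (∀ p ∈ s, ∀ u v w : V,
    fderiv ℝ (fun q => g q v w) p u = g p (Γ p u v) w + g p v (Γ p u w))

/-- Covariant derivative `∇ᵤ X` of a vector field `X` at `p`. -/
def cov (Γ : V → V → V → V) (X : V → V) (p u : V) : V :=
  fderiv ℝ X p u + Γ p u (X p)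

/-- Curvature tensor `R(u,v)w` at `p` (evaluated on constant extensions). -/
def Rm (Γ : V → V → V → V) (p u v w : V) : V :=
  fderiv ℝ (fun q => Γ q v w) p u - fderiv ℝ (fun q => Γ q u w) p v
    + Γ p u (Γ p v w) - Γ p v (Γ p u w)

/-- Covariant derivative `(∇ᵤ A)(v)` of a (1,1)-tensor field `A`. -/
def covOp (Γ : V → V → V → V) (A : V → V → V) (p u v : V) : V :=
  fderiv ℝ (fun q => A q v) p u + Γ p u (A p v) - A p (Γ p u v)

/-- Covariant derivative of a (1,2)-tensor field. -/
def covT2 (Γ : V → V → V → V) (A : V → V → V → V) (p x u v : V) : V :=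
  fderiv ℝ (fun q => A q u v) p x + Γ p x (A p u v)
    - A p (Γ p x u) v - A p u (Γ p x v)

/-- Covariant derivative of a (1,3)-tensor field. -/
def covT3 (Γ : V → V → V → V) (B : V → V → V → V → V) (p x u v w : V) : V :=
  fderiv ℝ (fun q => B q u v w) p x + Γ p x (B p u v w)
    - B p (Γ p x u) v w - B p u (Γ p x v) w - B p u v (Γ p x w)

/-- Local symmetry: `∇R = 0`. -/
def LocallySymmetricOn (s : Set V) (Γ : V → V → V → V) : Prop :=
  ∀ p ∈ s, ∀ x u v w : V, covT3 Γ (Rm Γ) p x u v w = 0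

/-- Constant sectional curvature `k`. -/
def ConstCurvOn (s : Set V) (g : V → V → V → ℝ) (Γ : V → V → V → V) (k : ℝ) : Prop :=
  ∀ p ∈ s, ∀ u v w : V, Rm Γ p u v w = k • (g p v w • u - g p u w • v)

def HasConstCurv (s : Set V) (g : V → V → V → ℝ) (k : ℝ) : Prop :=
  ∃ Γ : V → V → V → V, IsLeviCivitaOn s g Γ ∧ ConstCurvOn s g Γ k

/-- Torsion of a connection (with the factor 1/2 normalization of the paper). -/
def torsion (Γ : V → V → V → V) (p u v : V) : V := (2 : ℝ)⁻¹ • (Γ p u v - Γ p v u)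

/-- An almost contact metric structure on `s`. -/
structure ACM (s : Set V) where
  phi : V → V → V
  xi : V → V
  eta : V → V → ℝ
  g : V → V → V → ℝ
  smooth_phi : ∀ u : V, ContDiffOn ℝ (⊤ : ℕ∞) (fun p => phi p u) s
  smooth_xi : ContDiffOn ℝ (⊤ : ℕ∞) xi s
  smooth_eta : ∀ u : V, ContDiffOn ℝ (⊤ : ℕ∞) (fun p => eta p u) s
  lin_phi : ∀ p ∈ s, IsLinearMap ℝ (phi p)
  lin_eta : ∀ p ∈ s, IsLinearMap ℝ (eta p)
  metric : IsMetricOn s g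
  phi_sq : ∀ p ∈ s, ∀ u : V, phi p (phi p u) = -u + eta p u • xi p
  eta_xi : ∀ p ∈ s, eta p (xi p) = 1
  compat : ∀ p ∈ s, ∀ u v : V, g p (phi p u) (phi p v) = g p u v - eta p u * eta p v

/-- Fundamental 2-form `Φ(u,v) = g(u, φ v)`. -/
def FPhi {s : Set V} (S : ACM s) (p u v : V) : ℝ := S.g p u (S.phi p v)

/-- Lie derivative `(L_ξ φ)(u)` at `p` (constant extension of `u`). -/
def lieXiPhi (phi : V → V → V) (xi : V → V) (p u : V) : V :=
  fderiv ℝ (fun q => phi q u) p (xi p) - fderiv ℝ xi p (phi p u)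
    + phi p (fderiv ℝ xi p u)

/-- The operator `h' = (1/(2α)) (L_ξ φ) ∘ φ`. -/
def hpr (α : ℝ) (phi : V → V → V) (xi : V → V) (p u : V) : V :=
  (1 / (2 * α)) • lieXiPhi phi xi p (phi p u)

/-- `dη(u,v)` (constant extensions). -/
def dEta (eta : V → V → ℝ) (p u v : V) : ℝ :=
  fderiv ℝ (fun q => eta q v) p u - fderiv ℝ (fun q => eta q u) p v

/-- `S` is an almost α-Kenmotsu structure on `s` : `dη = 0` and `dΦ = 2α η ∧ Φ`. -/
structure IsAK (s : Set V) (S : ACM s) (α : ℝ) : Prop where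
  pos : 0 < α
  deta : ∀ p ∈ s, ∀ u v : V, dEta S.eta p u v = 0
  dphi : ∀ p ∈ s, ∀ u v w : V,
    fderiv ℝ (fun q => FPhi S q v w) p u - fderiv ℝ (fun q => FPhi S q u w) p v
      + fderiv ℝ (fun q => FPhi S q u v) p w
    = 2 * α * (S.eta p u * FPhi S p v w - S.eta p v * FPhi S p u w
        + S.eta p w * FPhi S p u v)

/-- Nijenhuis torsion `[φ,φ](u,v)` at `p` (constant extensions). -/
def nijPhi (phi : V → V → V) (p u v : V) : V :=
  fderiv ℝ (fun q => phi q v) p (phi p u) - fderiv ℝ (fun q => phi q u) p (phi p v)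
    + phi p (fderiv ℝ (fun q => phi q u) p v) - phi p (fderiv ℝ (fun q => phi q v) p u)

/-- Normality: `N = [φ,φ] + 2 dη ⊗ ξ = 0`. -/
def IsNormal (s : Set V) (S : ACM s) : Prop :=
  ∀ p ∈ s, ∀ u v : V, nijPhi S.phi p u v + (2 * dEta S.eta p u v) • S.xi p = 0

/-- CR-integrability: the Nijenhuis torsion of φ vanishes on `D = ker η`
(equivalently the integral manifolds of `D` are Kähler). -/
def CRIntegrableOn (s : Set V) (S : ACM s) : Prop :=
  ∀ p ∈ s, ∀ u v : V, S.eta p u = 0 → S.eta p v = 0 → nijPhi S.phi p u v = 0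

/-- `ξ` belongs to the (κ,μ)'-nullity distribution. -/
def KMuNullity (s : Set V) (S : ACM s) (α κ μ : ℝ) (Γ : V → V → V → V) : Prop :=
  ∀ p ∈ s, ∀ u v : V,
    Rm Γ p u v (S.xi p)
      = κ • (S.eta p v • u - S.eta p u • v)
        + μ • (S.eta p v • hpr α S.phi S.xi p u - S.eta p u • hpr α S.phi S.xi p v)

/-- `h'` is η-parallel. -/
def EtaParallelH (s : Set V) (S : ACM s) (α : ℝ) (Γ : V → V → V → V) : Prop :=
  ∀ p ∈ s, ∀ u v w : V, S.eta p u = 0 → S.eta p v = 0 → S.eta p w = 0 →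
    S.g p (covOp Γ (hpr α S.phi S.xi) p u v) w = 0

/-- `∇_ξ h' = 0`. -/
def XiParallelH (s : Set V) (S : ACM s) (α : ℝ) (Γ : V → V → V → V) : Prop :=
  ∀ p ∈ s, ∀ v : V, covOp Γ (hpr α S.phi S.xi) p (S.xi p) v = 0

/-- The canonical connection `∇̃_X Y = ∇_X Y + α g(X + h'X, Y)ξ − α η(Y)(X + h'X)`. -/
def canonical {s : Set V} (α : ℝ) (S : ACM s) (Γ : V → V → V → V) : V → V → V → V :=
  fun p u v =>
    Γ p u v + (α * S.g p (u + hpr α S.phi S.xi p u) v) • S.xi p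
      - (α * S.eta p v) • (u + hpr α S.phi S.xi p u)

def ParallelTorsion (s : Set V) (Γ : V → V → V → V) : Prop :=
  ∀ p ∈ s, ∀ x u v : V, covT2 Γ (torsion Γ) p x u v = 0

def ParallelCurv (s : Set V) (Γ : V → V → V → V) : Prop :=
  ∀ p ∈ s, ∀ x u v w : V, covT3 Γ (Rm Γ) p x u v w = 0

def FlatCurv (s : Set V) (Γ : V → V → V → V) : Prop :=
  ∀ p ∈ s, ∀ u v w : V, Rm Γ p u v w = 0

def HasEigen (h : V → V) (c : ℝ) : Prop := ∃ u : V, u ≠ 0 ∧ h u = c • u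

/-- Multiplicity of the eigenvalue `c` of a (pointwise linear) operator. -/
def eigMult (h : V → V) (c : ℝ) : ℕ :=
  Module.finrank ℝ ↥(Submodule.span ℝ {u : V | h u = c • u})

/-- `0` is a simple eigenvalue of `h'`: its kernel is spanned by `ξ`. -/
def KernelIsXiLine (xi₀ : V) (h : V → V) : Prop :=
  ∀ u : V, h u = 0 → ∃ a : ℝ, u = a • xi₀

def hprNonzero (s : Set V) (S : ACM s) (α : ℝ) : Prop :=
  ∃ p ∈ s, ∃ u : V, hpr α S.phi S.xi p u ≠ 0

/-- `S'` is the D-homothetic deformation of `S` with constant `β`. -/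
def IsDHom (s : Set V) (S S' : ACM s) (β : ℝ) : Prop :=
  ∀ p ∈ s,
    (∀ u : V, S'.phi p u = S.phi p u) ∧ S'.xi p = β⁻¹ • S.xi p ∧
    (∀ u : V, S'.eta p u = β * S.eta p u) ∧
    (∀ u v : V, S'.g p u v = β * S.g p u v + β * (β - 1) * (S.eta p u * S.eta p v))

/-- Local equivalence of almost contact metric structures. -/
def LocallyEquivalent (s : Set V) (S : ACM s) (s' : Set V) (S' : ACM s') : Prop :=
  ∀ p ∈ s, ∀ q ∈ s', ∃ (U U' : Set V) (f finv : V → V),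
    p ∈ U ∧ IsOpen U ∧ U ⊆ s ∧ q ∈ U' ∧ IsOpen U' ∧ U' ⊆ s' ∧ f p = q ∧
    ContDiffOn ℝ (⊤ : ℕ∞) f U ∧ Set.BijOn f U U' ∧
    ContDiffOn ℝ (⊤ : ℕ∞) finv U' ∧ (∀ x ∈ U, finv (f x) = x) ∧
    ∀ x ∈ U,
      fderiv ℝ f x (S.xi x) = S'.xi (f x) ∧
      (∀ u : V, fderiv ℝ f x (S.phi x u) = S'.phi (f x) (fderiv ℝ f x u)) ∧
      (∀ u : V, S'.eta (f x) (fderiv ℝ f x u) = S.eta x u) ∧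
      (∀ u v : V, S'.g (f x) (fderiv ℝ f x u) (fderiv ℝ f x v) = S.g x u v)

/-- Local equivalence up to a D-homothetic deformation. -/
def EquivUpToDHom (s : Set V) (S : ACM s) (s' : Set V) (S' : ACM s') : Prop :=
  ∃ β : ℝ, 0 < β ∧ ∃ S₁ : ACM s, IsDHom s S S₁ β ∧ LocallyEquivalent s S₁ s' S'

/-- Involutivity (integrability) of a distribution. -/
def IsInvolutive (s : Set V) (D : V → Set V) : Prop :=
  ∀ X Y : V → V, (∀ p ∈ s, DifferentiableAt ℝ X p) → (∀ p ∈ s, DifferentiableAt ℝ Y p) →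
    (∀ p ∈ s, X p ∈ D p) → (∀ p ∈ s, Y p ∈ D p) →
    ∀ p ∈ s, fderiv ℝ Y p (X p) - fderiv ℝ X p (Y p) ∈ D p

/-- The leaves of the distribution `D` are totally geodesic. -/
def TotallyGeodesicDist (s : Set V) (D : V → Set V) (Γ : V → V → V → V) : Prop :=
  ∀ X Y : V → V, (∀ p ∈ s, DifferentiableAt ℝ X p) → (∀ p ∈ s, DifferentiableAt ℝ Y p) →
    (∀ p ∈ s, X p ∈ D p) → (∀ p ∈ s, Y p ∈ D p) →
    ∀ p ∈ s, cov Γ Y p (X p) ∈ D p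

/-- The leaves of the distribution `D` are totally umbilical. -/
def TotallyUmbilicalDist (s : Set V) (D : V → Set V) (g : V → V → V → ℝ)
    (Γ : V → V → V → V) : Prop :=
  ∃ H : V → V, (∀ p ∈ s, ∀ w ∈ D p, g p (H p) w = 0) ∧
    ∀ X Y : V → V, (∀ p ∈ s, DifferentiableAt ℝ X p) → (∀ p ∈ s, DifferentiableAt ℝ Y p) →
      (∀ p ∈ s, X p ∈ D p) → (∀ p ∈ s, Y p ∈ D p) →
      ∀ p ∈ s, cov Γ Y p (X p) - g p (X p) (Y p) • H p ∈ D p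

/-- The eigendistribution `[λ]` of `h'`. -/
def eigDist {s : Set V} (α : ℝ) (S : ACM s) (lam : ℝ) : V → Set V :=
  fun p => {u : V | hpr α S.phi S.xi p u = lam • u ∧ S.eta p u = 0}

/-- The distribution `[ξ] ⊕ [λ]`. -/
def xiPlusEigDist {s : Set V} (α : ℝ) (S : ACM s) (lam : ℝ) : V → Set V :=
  fun p => {u : V | hpr α S.phi S.xi p u = lam • (u - S.eta p u • S.xi p)}

/-- An almost Hermitian structure on an open set of `E m`. -/
structure AHerm (m : ℕ) (W : Set (E m)) where
  J : E m → E m → E m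
  h : E m → E m → E m → ℝ
  smooth_J : ∀ u : E m, ContDiffOn ℝ (⊤ : ℕ∞) (fun p => J p u) W
  lin_J : ∀ p ∈ W, IsLinearMap ℝ (J p)
  metric : IsMetricOn W h
  J_sq : ∀ p ∈ W, ∀ u : E m, J p (J p u) = -u
  compat : ∀ p ∈ W, ∀ u v : E m, h p (J p u) (J p v) = h p u v

/-- The Kähler form of an almost Hermitian structure. -/
def Kform {m : ℕ} {W : Set (E m)} (K : AHerm m W) (p u v : E m) : ℝ := K.h p u (K.J p v)

/-- Almost Kähler: the Kähler form is closed. -/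
def IsAlmostKaehler {m : ℕ} {W : Set (E m)} (K : AHerm m W) : Prop :=
  ∀ p ∈ W, ∀ u v w : E m,
    fderiv ℝ (fun q => Kform K q v w) p u - fderiv ℝ (fun q => Kform K q u w) p v
      + fderiv ℝ (fun q => Kform K q u v) p w = 0

/-- Kähler: almost Kähler with integrable `J`. -/
def IsKaehler {m : ℕ} {W : Set (E m)} (K : AHerm m W) : Prop :=
  IsAlmostKaehler K ∧ ∀ p ∈ W, ∀ u v : E m, nijPhi K.J p u v = 0

/-- `M` is locally a warped product `M' ×_f N` of an open interval and an almost
Kähler manifold, with warping function `f = c e^{α t}`. -/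
def LocWarpedIntervalAK (n : ℕ) (s : Set (E (2*n+1))) (S : ACM s) (α : ℝ) : Prop :=
  ∀ p ∈ s, ∃ (U : Set (E (2*n+1))) (I : Set ℝ) (W : Set (E (2*n)))
    (K : AHerm (2*n) W) (c : ℝ) (ψ : E (2*n+1) → ℝ × E (2*n))
    (χ : ℝ × E (2*n) → E (2*n+1)),
    p ∈ U ∧ IsOpen U ∧ U ⊆ s ∧ IsOpen I ∧ I.OrdConnected ∧ IsOpen W ∧
    IsAlmostKaehler K ∧ 0 < c ∧
    ContDiffOn ℝ (⊤ : ℕ∞) ψ U ∧ Set.BijOn ψ U (I ×ˢ W) ∧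
    ContDiffOn ℝ (⊤ : ℕ∞) χ (I ×ˢ W) ∧ (∀ x ∈ U, χ (ψ x) = x) ∧
    ∀ q ∈ U, ∀ u v : E (2*n+1),
      S.g q u v = (fderiv ℝ ψ q u).1 * (fderiv ℝ ψ q v).1
        + (c * Real.exp (α * (ψ q).1))^2
          * K.h (ψ q).2 (fderiv ℝ ψ q u).2 (fderiv ℝ ψ q v).2

/-- Local isometry with a Riemannian product of constant curvature manifolds. -/
def LocIsomProd (m n₁ n₂ : ℕ) (s : Set (E m)) (g : E m → E m → E m → ℝ)
    (k₁ k₂ : ℝ) : Prop :=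
  ∀ p ∈ s, ∃ (U : Set (E m)) (W₁ : Set (E n₁)) (W₂ : Set (E n₂))
    (g₁ : E n₁ → E n₁ → E n₁ → ℝ) (g₂ : E n₂ → E n₂ → E n₂ → ℝ)
    (ψ : E m → E n₁ × E n₂) (χ : E n₁ × E n₂ → E m),
    p ∈ U ∧ IsOpen U ∧ U ⊆ s ∧ IsOpen W₁ ∧ IsOpen W₂ ∧
    IsMetricOn W₁ g₁ ∧ IsMetricOn W₂ g₂ ∧
    HasConstCurv W₁ g₁ k₁ ∧ HasConstCurv W₂ g₂ k₂ ∧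
    ContDiffOn ℝ (⊤ : ℕ∞) ψ U ∧ Set.BijOn ψ U (W₁ ×ˢ W₂) ∧
    ContDiffOn ℝ (⊤ : ℕ∞) χ (W₁ ×ˢ W₂) ∧ (∀ x ∈ U, χ (ψ x) = x) ∧
    ∀ q ∈ U, ∀ u v : E m,
      g q u v = g₁ (ψ q).1 (fderiv ℝ ψ q u).1 (fderiv ℝ ψ q v).1
        + g₂ (ψ q).2 (fderiv ℝ ψ q u).2 (fderiv ℝ ψ q v).2

/-- The axioms characterizing the canonical connection of a CR-integrable
almost α-Kenmotsu structure: `φ`, `g`, `η` parallel, together with the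
torsion conditions a), b), c). -/
def IsCanonicalFor (s : Set V) (S : ACM s) (α : ℝ) (Γt : V → V → V → V) : Prop :=
  IsConnectionOn s Γt ∧
  (∀ p ∈ s, ∀ u v : V, covOp Γt S.phi p u v = 0) ∧
  (∀ p ∈ s, ∀ u v w : V,
    fderiv ℝ (fun q => S.g q v w) p u = S.g p (Γt p u v) w + S.g p v (Γt p u w)) ∧
  (∀ p ∈ s, ∀ u v : V, fderiv ℝ (fun q => S.eta q v) p u = S.eta p (Γt p u v)) ∧
  (∀ p ∈ s, ∀ u v : V, S.eta p u = 0 → S.eta p v = 0 → torsion Γt p u v = 0) ∧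
  (∀ p ∈ s, ∀ u : V, S.eta p u = 0 →
    (2 : ℝ) • torsion Γt p (S.xi p) u = α • (u + hpr α S.phi S.xi p u)) ∧
  (∀ p ∈ s, ∀ u v : V, S.g p (torsion Γt p (S.xi p) u) v
    = S.g p u (torsion Γt p (S.xi p) v))

/-! Since `dη = 0`, the Koszul formula for `ḡ = βg + β(β-1) η ⊗ η` shows that the two
Levi-Civita connections differ by `∇̄ᵤv = ∇ᵤv + ((β-1)/β) (∇ᵤη)(v) ξ`. The correction vanishes
on `ξ`, because `(∇ᵤη)(v) = g(v, ∇ᵤξ)` and `g(ξ, ∇ᵤξ) = 0`, and its contribution to `R̄(u,v)ξ`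
is a multiple of `g(∇ᵥξ, ∇ᵤξ) - g(∇ᵤξ, ∇ᵥξ) = 0`; hence `R̄(u,v)ξ = R(u,v)ξ`. Since
`L_{ξ/β} φ = β⁻¹ L_ξ φ`, the operator `h'` of the deformed structure (with constant `α/β`) is
unchanged, and the nullity condition for `ξ̄ = ξ/β` follows by rescaling. -/

open scoped ContDiff Topology

theorem _root_.ContDiffOn.differentiableAt_of_isOpen {W : Type*} [NormedAddCommGroup W]
    [NormedSpace ℝ W] {f : V → W} {s : Set V} {p : V} (hf : ContDiffOn ℝ ∞ f s)
    (hs : IsOpen s) (hp : p ∈ s) :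
    DifferentiableAt ℝ f p :=
  (hf.differentiableOn (by simp)).differentiableAt (hs.mem_nhds hp)

section PointwiseLinear

variable [FiniteDimensional ℝ V] {W : Type*} [NormedAddCommGroup W] [NormedSpace ℝ W]
  {s : Set V} {F : V → V → W} {n : WithTop ℕ∞}

theorem exists_clm_contDiffOn_eq (hlin : ∀ q ∈ s, IsLinearMap ℝ (F q))
    (hF : ∀ y, ContDiffOn ℝ n (fun q => F q y) s) :
    ∃ L : V → V →L[ℝ] W, ContDiffOn ℝ n L s ∧ ∀ q ∈ s, ∀ y, L q y = F q y := by
  classical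
  let L : V → V →L[ℝ] W := fun q =>
    if h : q ∈ s then LinearMap.toContinuousLinearMap (hlin q h).mk' else 0
  have hL : ∀ q ∈ s, ∀ y, L q y = F q y := fun q hq y => by simp [L, hq]
  exact ⟨L, contDiffOn_clm_apply.mpr fun y => (hF y).congr fun q hq => hL q hq y, hL⟩

theorem contDiffOn_apply_of_isLinearMap (hlin : ∀ q ∈ s, IsLinearMap ℝ (F q))
    (hF : ∀ y, ContDiffOn ℝ n (fun q => F q y) s) {X : V → V} (hX : ContDiffOn ℝ n X s) :
    ContDiffOn ℝ n (fun q => F q (X q)) s := by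
  obtain ⟨L, hL, hLF⟩ := exists_clm_contDiffOn_eq hlin hF
  exact (hL.clm_apply hX).congr fun q hq => (hLF q hq (X q)).symm

theorem fderiv_apply_of_isLinearMap (hs : IsOpen s) {p : V} (hp : p ∈ s)
    (hlin : ∀ q ∈ s, IsLinearMap ℝ (F q)) (hF : ∀ y, ContDiffOn ℝ ∞ (fun q => F q y) s)
    {X : V → V} (hX : DifferentiableAt ℝ X p) (u : V) :
    fderiv ℝ (fun q => F q (X q)) p u
      = fderiv ℝ (fun q => F q (X p)) p u + F p (fderiv ℝ X p u) := by
  obtain ⟨L, hL, hLF⟩ := exists_clm_contDiffOn_eq hlin hF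
  have hLp : DifferentiableAt ℝ L p := hL.differentiableAt_of_isOpen hs hp
  have hev : ∀ Y : V → V, (fun q => F q (Y q)) =ᶠ[𝓝 p] fun q => L q (Y q) := fun Y =>
    Filter.mem_of_superset (hs.mem_nhds hp) fun q hq => (hLF q hq (Y q)).symm
  rw [(hev X).fderiv_eq, (hev fun _ => X p).fderiv_eq, fderiv_clm_apply hLp hX,
    fderiv_clm_apply hLp (differentiableAt_const _)]
  simp [hLF p hp, add_comm]

end PointwiseLinear

section Metric

variable {s : Set V} {g : V → V → V → ℝ} {p : V}

theorem IsMetricOn.isLinearMap_right (hg : IsMetricOn s g) (hp : p ∈ s) (u : V) :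
    IsLinearMap ℝ (g p u) := by
  constructor
  · intro v w
    rw [hg.2.1 p hp u, (hg.2.2.1 p hp u).map_add, hg.2.1 p hp v, hg.2.1 p hp w]
  · intro c v
    rw [hg.2.1 p hp u, (hg.2.2.1 p hp u).map_smul, hg.2.1 p hp v]

theorem IsMetricOn.nonneg (hg : IsMetricOn s g) (hp : p ∈ s) (v : V) : 0 ≤ g p v v := by
  rcases eq_or_ne v 0 with rfl | hv
  · exact ((hg.2.2.1 p hp 0).mk' _).map_zero.ge
  · exact (hg.2.2.2 p hp v hv).le

theorem IsMetricOn.eq_of_forall (hg : IsMetricOn s g) (hp : p ∈ s) {x y : V}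
    (h : ∀ w, g p x w = g p y w) : x = y := by
  by_contra hxy
  have hsub : g p (x - y) (x - y) = 0 := by
    rw [(hg.2.2.1 p hp _).map_sub, h, sub_self]
  exact (hg.2.2.2 p hp _ (sub_ne_zero.mpr hxy)).ne' hsub

theorem IsLeviCivitaOn.koszul {Γ : V → V → V → V} (hΓ : IsLeviCivitaOn s g Γ)
    (hg : IsMetricOn s g) (hp : p ∈ s) (u v w : V) :
    2 * g p (Γ p u v) w = fderiv ℝ (fun q => g q v w) p u + fderiv ℝ (fun q => g q u w) p v
      - fderiv ℝ (fun q => g q u v) p w := by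
  rw [hΓ.2.2 p hp u v w, hΓ.2.2 p hp v u w, hΓ.2.2 p hp w u v, hΓ.2.1 p hp v u,
    hΓ.2.1 p hp w u, hΓ.2.1 p hp w v, hg.2.1 p hp v (Γ p u w), hg.2.1 p hp u (Γ p v w)]
  ring

end Metric

theorem IsConnectionOn.rm_smul {s : Set V} {Γ : V → V → V → V} (hΓ : IsConnectionOn s Γ)
    (hs : IsOpen s) {p : V} (hp : p ∈ s) (u v w : V) (c : ℝ) :
    Rm Γ p u v (c • w) = c • Rm Γ p u v w := by
  have hd a : fderiv ℝ (fun q => Γ q a (c • w)) p = c • fderiv ℝ (fun q => Γ q a w) p := by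
    have hev : (fun q => Γ q a (c • w)) =ᶠ[𝓝 p] fun q => c • Γ q a w :=
      Filter.mem_of_superset (hs.mem_nhds hp) fun q hq => (hΓ.2.2 q hq a).map_smul c w
    rw [hev.fderiv_eq, fderiv_fun_const_smul ((hΓ.1 a w).differentiableAt_of_isOpen hs hp)]
  simp only [Rm, hd, (hΓ.2.2 p hp _).map_smul, smul_apply, smul_sub, smul_add]

theorem lieXiPhi_const_smul {φ : V → V → V} {ξ : V → V} {p : V} (hφ : IsLinearMap ℝ (φ p))
    (c : ℝ) (u : V) : lieXiPhi φ (fun q => c • ξ q) p u = c • lieXiPhi φ ξ p u := by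
  have hξ : fderiv ℝ (fun q => c • ξ q) p = c • fderiv ℝ ξ p :=
    congrFun (fderiv_const_smul_field (f := ξ) c) p
  simp only [lieXiPhi, hξ, smul_apply, map_smul, hφ.map_smul, smul_sub, smul_add]

theorem hpr_div_inv_smul {φ : V → V → V} {ξ : V → V} {p : V} (hφ : IsLinearMap ℝ (φ p))
    {c : ℝ} (hc : c ≠ 0) (α : ℝ) (u : V) :
    hpr (α / c) φ (fun q => c⁻¹ • ξ q) p u = hpr α φ ξ p u := by
  rw [hpr, hpr, lieXiPhi_const_smul hφ, smul_smul]
  congr 1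
  field_simp

section AlmostContact

variable {s : Set V} {p : V}

theorem ACM.phi_xi (S : ACM s) (hp : p ∈ s) : S.phi p (S.xi p) = 0 := by
  have hφ := S.lin_phi p hp
  have hφφ : S.phi p (S.phi p (S.xi p)) = 0 := by
    rw [S.phi_sq p hp, S.eta_xi p hp, one_smul, neg_add_cancel]
  set c := S.eta p (S.phi p (S.xi p))
  have hφξ : S.phi p (S.xi p) = c • S.xi p := by
    have h := S.phi_sq p hp (S.phi p (S.xi p))
    rw [hφφ, hφ.map_zero] at h
    linear_combination (norm := module) h
  have hc : c * c = 0 := by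
    have h := congrArg (S.phi p) hφξ
    rw [hφφ, hφ.map_smul, hφξ, smul_smul] at h
    have h' := congrArg (S.eta p) h
    rw [(S.lin_eta p hp).map_zero, (S.lin_eta p hp).map_smul, S.eta_xi p hp, smul_eq_mul,
      mul_one] at h'
    exact h'.symm
  rw [hφξ, mul_self_eq_zero.mp hc, zero_smul]

theorem ACM.g_xi (S : ACM s) (hp : p ∈ s) (u : V) : S.g p u (S.xi p) = S.eta p u := by
  have h := S.compat p hp u (S.xi p)
  rw [S.phi_xi hp, S.eta_xi p hp, (S.metric.isLinearMap_right hp _).map_zero] at h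
  linarith

end AlmostContact

/-- The covariant derivative `(∇ᵤ θ)(v)` of a 1-form `θ`. -/
def covForm (Γ : V → V → V → V) (θ : V → V → ℝ) (p u v : V) : ℝ :=
  fderiv ℝ (fun q => θ q v) p u - θ p (Γ p u v)

section CovForm

variable [FiniteDimensional ℝ V] {s : Set V} {p : V} {Γ : V → V → V → V}

theorem contDiffOn_covForm (hs : IsOpen s) {θ : V → V → ℝ}
    (hθlin : ∀ q ∈ s, IsLinearMap ℝ (θ q)) (hθ : ∀ v, ContDiffOn ℝ ∞ (fun q => θ q v) s)
    (hΓ : IsConnectionOn s Γ) (u v : V) :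
    ContDiffOn ℝ ∞ (fun q => covForm Γ θ q u v) s :=
  (((hθ v).fderiv_of_isOpen hs le_rfl).clm_apply contDiffOn_const).sub
    (contDiffOn_apply_of_isLinearMap hθlin hθ (hΓ.1 u v))

variable (hs : IsOpen s) (S : ACM s) (hΓ : IsLeviCivitaOn s S.g Γ)
include hs hΓ

theorem ACM.covForm_eta_eq (hp : p ∈ s) (u v : V) :
    covForm Γ S.eta p u v = S.g p v (cov Γ S.xi p u) := by
  have h := fderiv_apply_of_isLinearMap hs hp (F := fun q => S.g q v)
    (fun q hq => S.metric.isLinearMap_right hq v) (fun y => S.metric.1 v y)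
    (S.smooth_xi.differentiableAt_of_isOpen hs hp) u
  have hev : (fun q => S.g q v (S.xi q)) =ᶠ[𝓝 p] fun q => S.eta q v :=
    Filter.mem_of_superset (hs.mem_nhds hp) fun q hq => S.g_xi hq v
  rw [hev.fderiv_eq, hΓ.2.2 p hp u v (S.xi p), S.g_xi hp] at h
  rw [covForm, cov, (S.metric.isLinearMap_right hp v).map_add, h]
  ring

theorem ACM.isLinearMap_covForm_eta (hp : p ∈ s) (u : V) :
    IsLinearMap ℝ (covForm Γ S.eta p u) := by
  rw [funext (S.covForm_eta_eq hs hΓ hp u)]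
  exact S.metric.2.2.1 p hp _

theorem ACM.covForm_eta_xi (hp : p ∈ s) (u : V) : covForm Γ S.eta p u (S.xi p) = 0 := by
  have h := fderiv_apply_of_isLinearMap hs hp S.lin_eta S.smooth_eta
    (S.smooth_xi.differentiableAt_of_isOpen hs hp) u
  have hev : (fun q => S.eta q (S.xi q)) =ᶠ[𝓝 p] fun _ => 1 :=
    Filter.mem_of_superset (hs.mem_nhds hp) fun q hq => S.eta_xi q hq
  rw [hev.fderiv_eq, fderiv_const_apply, zero_apply] at h
  have h' := S.covForm_eta_eq hs hΓ hp u (S.xi p)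
  rw [S.metric.2.1 p hp, S.g_xi hp, cov, (S.lin_eta p hp).map_add] at h'
  rw [covForm] at h' ⊢
  linarith

theorem ACM.fderiv_covForm_eta_xi (hp : p ∈ s) (u a : V) :
    fderiv ℝ (fun q => covForm Γ S.eta q a (S.xi p)) p u
      = -covForm Γ S.eta p a (fderiv ℝ S.xi p u) := by
  have h := fderiv_apply_of_isLinearMap hs hp (F := fun q => covForm Γ S.eta q a)
    (fun q hq => S.isLinearMap_covForm_eta hs hΓ hq a)
    (contDiffOn_covForm hs S.lin_eta S.smooth_eta hΓ.1 a)
    (S.smooth_xi.differentiableAt_of_isOpen hs hp) u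
  have hev : (fun q => covForm Γ S.eta q a (S.xi q)) =ᶠ[𝓝 p] fun _ => 0 :=
    Filter.mem_of_superset (hs.mem_nhds hp) fun q hq => S.covForm_eta_xi hs hΓ hq a
  rw [hev.fderiv_eq, fderiv_const_apply, zero_apply] at h
  linarith

end CovForm

section DHomothetic

variable {s : Set V} {p : V} {β : ℝ}

def dHomMetric (S : ACM s) (β : ℝ) (p u v : V) : ℝ :=
  β * S.g p u v + β * (β - 1) * (S.eta p u * S.eta p v)

theorem ACM.isMetricOn_dHomMetric (S : ACM s) (hβ : 0 < β) : IsMetricOn s (dHomMetric S β) := by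
  refine ⟨fun u v => ?_, fun p hp u v => ?_, fun p hp v => ⟨fun x y => ?_, fun c x => ?_⟩,
    fun p hp x hx => ?_⟩
  · exact (contDiffOn_const.mul (S.metric.1 u v)).add
      (contDiffOn_const.mul ((S.smooth_eta u).mul (S.smooth_eta v)))
  · simp only [dHomMetric, S.metric.2.1 p hp u v, mul_comm (S.eta p u)]
  · simp only [dHomMetric, (S.metric.2.2.1 p hp v).map_add, (S.lin_eta p hp).map_add]
    ring
  · simp only [dHomMetric, (S.metric.2.2.1 p hp v).map_smul, (S.lin_eta p hp).map_smul,
      smul_eq_mul]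
    ring
  · -- `ḡ(x,x) = β g(φx,φx) + β² η(x)²`
    have hφx : 0 ≤ S.g p x x - S.eta p x * S.eta p x := by
      rw [← S.compat p hp]
      exact S.metric.nonneg hp _
    rcases eq_or_ne (S.eta p x) 0 with hηx | hηx
    · simpa [dHomMetric, hηx] using mul_pos hβ (S.metric.2.2.2 p hp x hx)
    · simp only [dHomMetric]
      nlinarith [mul_nonneg hβ.le hφx, mul_pos (mul_pos hβ hβ) (mul_self_pos.mpr hηx)]

theorem ACM.fderiv_dHomMetric (hs : IsOpen s) (S : ACM s) (hp : p ∈ s) (u v w : V) :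
    fderiv ℝ (fun q => dHomMetric S β q v w) p u
      = β * fderiv ℝ (fun q => S.g q v w) p u
        + β * (β - 1) * (fderiv ℝ (fun q => S.eta q v) p u * S.eta p w
          + S.eta p v * fderiv ℝ (fun q => S.eta q w) p u) := by
  have hη := fun y => (S.smooth_eta y).differentiableAt_of_isOpen hs hp
  have h : HasFDerivAt (fun q => dHomMetric S β q v w) _ p :=
    (((S.metric.1 v w).differentiableAt_of_isOpen hs hp).hasFDerivAt.const_mul β).fun_add
      (((hη v).hasFDerivAt.fun_mul (hη w).hasFDerivAt).const_mul (β * (β - 1)))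
  rw [h.fderiv]
  simp only [add_apply, smul_apply, smul_eq_mul]
  ring

theorem ACM.leviCivita_dHomMetric (hs : IsOpen s) (S : ACM s)
    (hdη : ∀ p ∈ s, ∀ u v, dEta S.eta p u v = 0) (hβ : 0 < β) {Γ Γb : V → V → V → V}
    (hΓ : IsLeviCivitaOn s S.g Γ) (hΓb : IsLeviCivitaOn s (dHomMetric S β) Γb) (hp : p ∈ s)
    (u v : V) : Γb p u v = Γ p u v + ((β - 1) / β * covForm Γ S.eta p u v) • S.xi p := by
  have hgb := S.isMetricOn_dHomMetric hβ
  refine hgb.eq_of_forall hp fun w => ?_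
  have hK := hΓ.koszul S.metric hp u v w
  have hKb := hΓb.koszul hgb hp u v w
  have hdη_symm := fun x y => sub_eq_zero.mp (hdη p hp x y)
  rw [S.fderiv_dHomMetric hs hp, S.fderiv_dHomMetric hs hp, S.fderiv_dHomMetric hs hp,
    hdη_symm v u, hdη_symm w u, hdη_symm w v] at hKb
  simp only [dHomMetric, covForm, (S.metric.2.2.1 p hp w).map_add,
    (S.metric.2.2.1 p hp w).map_smul, (S.lin_eta p hp).map_add, (S.lin_eta p hp).map_smul,
    S.metric.2.1 p hp (S.xi p) w, S.g_xi hp, S.eta_xi p hp, smul_eq_mul] at hKb ⊢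
  field_simp
  linear_combination (1 / 2 : ℝ) * hKb - (β / 2) * hK

end DHomothetic

theorem ACM.rm_xi_eq_of_eq_add_covForm [FiniteDimensional ℝ V] {s : Set V} {p : V}
    (hs : IsOpen s) (S : ACM s) {Γ Γb : V → V → V → V} (hΓ : IsLeviCivitaOn s S.g Γ) (c : ℝ)
    (hΓb : ∀ q ∈ s, ∀ u v, Γb q u v = Γ q u v + (c * covForm Γ S.eta q u v) • S.xi q)
    (hp : p ∈ s) (u v : V) : Rm Γb p u v (S.xi p) = Rm Γ p u v (S.xi p) := by
  have hB a y : DifferentiableAt ℝ (fun q => covForm Γ S.eta q a y) p :=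
    (contDiffOn_covForm hs S.lin_eta S.smooth_eta hΓ.1 a y).differentiableAt_of_isOpen hs hp
  have hξ := S.smooth_xi.differentiableAt_of_isOpen hs hp
  have hΓb_xi a : Γb p a (S.xi p) = Γ p a (S.xi p) := by
    rw [hΓb p hp, S.covForm_eta_xi hs hΓ hp, mul_zero, zero_smul, add_zero]
  have hdΓb a x : fderiv ℝ (fun q => Γb q a (S.xi p)) p x
      = fderiv ℝ (fun q => Γ q a (S.xi p)) p x
        - (c * covForm Γ S.eta p a (fderiv ℝ S.xi p x)) • S.xi p := by
    have hev : (fun q => Γb q a (S.xi p)) =ᶠ[𝓝 p]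
        fun q => Γ q a (S.xi p) + (c * covForm Γ S.eta q a (S.xi p)) • S.xi q :=
      Filter.mem_of_superset (hs.mem_nhds hp) fun q hq => hΓb q hq a (S.xi p)
    rw [hev.fderiv_eq, fderiv_fun_add ((hΓ.1.1 a _).differentiableAt_of_isOpen hs hp)
      (((hB a _).const_mul c).fun_smul hξ), fderiv_fun_smul ((hB a _).const_mul c) hξ,
      fderiv_const_mul (hB a _)]
    simp only [add_apply, smul_apply, ContinuousLinearMap.smulRight_apply,
      S.covForm_eta_xi hs hΓ hp, S.fderiv_covForm_eta_xi hs hΓ hp, smul_eq_mul]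
    module
  -- `R̄(u,v)ξ - R(u,v)ξ = c ((∇ᵤη)(∇ᵥξ) - (∇ᵥη)(∇ᵤξ)) ξ`, and `(∇ᵤη)(∇ᵥξ) = g(∇ᵥξ, ∇ᵤξ)`
  have hsymm : covForm Γ S.eta p u (cov Γ S.xi p v) = covForm Γ S.eta p v (cov Γ S.xi p u) := by
    rw [S.covForm_eta_eq hs hΓ hp, S.covForm_eta_eq hs hΓ hp, S.metric.2.1 p hp]
  have hlin := S.isLinearMap_covForm_eta hs hΓ hp
  rw [cov, (hlin u).map_add, cov, (hlin v).map_add] at hsymm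
  unfold Rm
  rw [hdΓb v u, hdΓb u v, hΓb_xi, hΓb_xi, hΓb p hp u, hΓb p hp v]
  linear_combination (norm := module) congrArg (fun t => (c * t) • S.xi p) hsymm

/-- invariance of `R_{XY}ξ` and the (κ,μ)'-nullity condition under
D-homothetic deformations. -/
theorem stmt_0 (n : ℕ) (s : Set (E (2*n+1))) (hs : IsOpen s) (S : ACM s)
    (α β κ μ : ℝ) (hAK : IsAK s S α) (hβ : 0 < β)
    (Γ Γb : E (2*n+1) → E (2*n+1) → E (2*n+1) → E (2*n+1))
    (hΓ : IsLeviCivitaOn s S.g Γ)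
    (hnull : KMuNullity s S α κ μ Γ)
    (gb : E (2*n+1) → E (2*n+1) → E (2*n+1) → ℝ)
    (hgb : ∀ p u v : E (2*n+1),
      gb p u v = β * S.g p u v + β * (β - 1) * (S.eta p u * S.eta p v))
    (hΓb : IsLeviCivitaOn s gb Γb) :
    (∀ p ∈ s, ∀ u v : E (2*n+1), Rm Γb p u v (S.xi p) = Rm Γ p u v (S.xi p)) ∧
    (∀ p ∈ s, ∀ u v : E (2*n+1),
      Rm Γb p u v (β⁻¹ • S.xi p)
        = (κ / β^2) • ((β * S.eta p v) • u - (β * S.eta p u) • v)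
          + (μ / β^2) • ((β * S.eta p v) • hpr (α/β) S.phi (fun q => β⁻¹ • S.xi q) p u
              - (β * S.eta p u) • hpr (α/β) S.phi (fun q => β⁻¹ • S.xi q) p v)) := by
  obtain rfl : gb = dHomMetric S β := funext fun p => funext fun u => funext (hgb p u)
  have hR : ∀ p ∈ s, ∀ u v, Rm Γb p u v (S.xi p) = Rm Γ p u v (S.xi p) := fun p hp =>
    S.rm_xi_eq_of_eq_add_covForm hs hΓ _
      (fun q hq => S.leviCivita_dHomMetric hs hAK.deta hβ hΓ hΓb hq) hp
  refine ⟨hR, fun p hp u v => ?_⟩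
  rw [hΓb.1.rm_smul hs hp, hR p hp, hnull p hp, hpr_div_inv_smul (S.lin_phi p hp) hβ.ne',
    hpr_div_inv_smul (S.lin_phi p hp) hβ.ne']
  match_scalars <;> field_simp

end AKG
end
end

section
/- Let (M^{2n+1}, φ, ξ, η, g) be an α-Kenmotsu manifold with canonical connection ∇̃ and curvature tensor R̃ of ∇̃. Then the following conditions are equivalent: (a) ∇̃R̃ = 0; (b) R̃ = 0; (c) M^{2n+1} has constant Riemannian sectional curvature k = −α²; (d) M^{2n+1} is a locally symmetric Riemannian manifold. -/
/- Common framework: a (2n+1)-dimensional manifold is modelled by an open subset `s`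
of Euclidean space; tensor fields are given pointwise (evaluated on constant vector
fields), connections are given by their Christoffel symbols, and covariant
derivatives / curvatures are expressed via `fderiv`. -/

noncomputable section

namespace AKG

open scoped RealInnerProductSpace

variable {V : Type*} [NormedAddCommGroup V] [NormedSpace ℝ V]

/-!
Normality and `dη = 0` give `L_ξ φ = 0`, so `h' = 0`, and the `ξ`-component of
`dΦ = 2α η ∧ Φ` then yields `∇ξ = α (I - η ⊗ ξ)`. By the Ricci identity
`R(u,v)ξ = α² (η(u) v - η(v) u)`, and the canonical connection `∇ + α g(·,·) ξ - α η ⊗ I` has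
curvature `R̃(u,v)w = R(u,v)w + α² (g(v,w) u - g(u,w) v)`, which is (b) ⇔ (c). A metric
connection of constant curvature has parallel curvature; conversely, differentiating the formula
for `R(u,v)ξ` against `∇R = 0` recovers curvature `-α²`. Finally pair symmetry of `R` gives
`R̃(ξ,·) = 0`, and the second Bianchi identity for `∇̃` with one entry `ξ` turns `∇̃R̃ = 0` into
`2α R̃ = 0`.
-/

open Filter Topology

section Calculus

variable {V W : Type*} [NormedAddCommGroup V] [NormedSpace ℝ V]
  [NormedAddCommGroup W] [NormedSpace ℝ W] {s : Set V} {p : V}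

theorem differentiableAt_of_contDiffOn {f : V → W} (hs : IsOpen s) (hp : p ∈ s)
    (hf : ContDiffOn ℝ (⊤ : ℕ∞) f s) : DifferentiableAt ℝ f p :=
  (hf.differentiableOn (by simp)).differentiableAt (hs.mem_nhds hp)

theorem fderiv_apply_eq_fderiv_clm {G : V → V →L[ℝ] W} (hG : DifferentiableAt ℝ G p) (x y : V) :
    fderiv ℝ (fun q => G q y) p x = fderiv ℝ G p x y := by
  simp [fderiv_clm_apply hG (differentiableAt_const y)]

theorem differentiableAt_fderiv_apply_of_contDiffOn {f : V → W} (hs : IsOpen s) (hp : p ∈ s)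
    (hf : ContDiffOn ℝ (⊤ : ℕ∞) f s) (y : V) :
    DifferentiableAt ℝ (fun q => fderiv ℝ f q y) p :=
  (differentiableAt_of_contDiffOn hs hp
    (hf.fderiv_of_isOpen hs (by exact_mod_cast le_top))).clm_apply (differentiableAt_const y)

theorem fderiv_fderiv_apply_comm {f : V → W} (hs : IsOpen s) (hp : p ∈ s)
    (hf : ContDiffOn ℝ (⊤ : ℕ∞) f s) (x y : V) :
    fderiv ℝ (fun q => fderiv ℝ f q y) p x = fderiv ℝ (fun q => fderiv ℝ f q x) p y := by
  have hf' := differentiableAt_of_contDiffOn hs hp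
    (hf.fderiv_of_isOpen hs (by exact_mod_cast le_top))
  rw [fderiv_apply_eq_fderiv_clm hf', fderiv_apply_eq_fderiv_clm hf',
    ((hf.contDiffAt (hs.mem_nhds hp)).isSymmSndFDerivAt
      (by simp only [minSmoothness_of_isRCLikeNormedField]
          exact WithTop.coe_le_coe.mpr le_top)) x y]

variable [FiniteDimensional ℝ V]

theorem exists_clm_family_of_linearOn (hs : IsOpen s) (hp : p ∈ s) {F : V → V → W}
    (hFd : ∀ y, DifferentiableAt ℝ (fun q => F q y) p) (hFl : ∀ q ∈ s, IsLinearMap ℝ (F q)) :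
    ∃ G : V → V →L[ℝ] W, DifferentiableAt ℝ G p ∧ ∀ᶠ q in 𝓝 p, ∀ y, F q y = G q y := by
  classical
  let b := Module.finBasis ℝ V
  let c : Fin (Module.finrank ℝ V) → V →L[ℝ] ℝ :=
    fun i => LinearMap.toContinuousLinearMap (b.coord i)
  refine ⟨fun q => ∑ i, (c i).smulRight (F q (b i)), ?_, ?_⟩
  · exact DifferentiableAt.fun_sum fun i _ =>
      ((ContinuousLinearMap.smulRightL ℝ V W (c i)).differentiableAt).comp p (hFd (b i))
  · filter_upwards [hs.mem_nhds hp] with q hq y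
    conv_lhs => rw [← b.sum_repr y]
    rw [show F q = ⇑(IsLinearMap.mk' _ (hFl q hq)) from rfl, map_sum]
    simp [c]

variable {F : V → V → W} (hs : IsOpen s) (hp : p ∈ s)
  (hFd : ∀ y, DifferentiableAt ℝ (fun q => F q y) p) (hFl : ∀ q ∈ s, IsLinearMap ℝ (F q))
include hs hp hFd hFl

theorem differentiableAt_apply_of_linearOn {X : V → V} (hX : DifferentiableAt ℝ X p) :
    DifferentiableAt ℝ (fun q => F q (X q)) p := by
  obtain ⟨G, hG, hFG⟩ := exists_clm_family_of_linearOn hs hp hFd hFl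
  exact (hG.clm_apply hX).congr_of_eventuallyEq (hFG.mono fun q h => h (X q) :)

theorem fderiv_apply_of_linearOn {X : V → V} (hX : DifferentiableAt ℝ X p) (x : V) :
    fderiv ℝ (fun q => F q (X q)) p x
      = fderiv ℝ (fun q => F q (X p)) p x + F p (fderiv ℝ X p x) := by
  obtain ⟨G, hG, hFG⟩ := exists_clm_family_of_linearOn hs hp hFd hFl
  have hFG' (Y : V → V) : (fun q => F q (Y q)) =ᶠ[𝓝 p] fun q => G q (Y q) :=
    hFG.mono fun q h => h (Y q)
  rw [(hFG' X).fderiv_eq, (hFG' fun _ => X p).fderiv_eq,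
    fderiv_clm_apply hG hX, fderiv_apply_eq_fderiv_clm hG, hFG.self_of_nhds]
  simp [add_comm]

theorem isLinearMap_fderiv_apply_of_linearOn (x : V) :
    IsLinearMap ℝ (fun y => fderiv ℝ (fun q => F q y) p x) := by
  obtain ⟨G, hG, hFG⟩ := exists_clm_family_of_linearOn hs hp hFd hFl
  have h : ∀ y, fderiv ℝ (fun q => F q y) p x = fderiv ℝ G p x y := fun y => by
    rw [EventuallyEq.fderiv_eq (f₁ := fun q => F q y) (hFG.mono fun q h => h y),
      fderiv_apply_eq_fderiv_clm hG]
  simp only [h]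
  exact ⟨map_add _, map_smul _⟩

theorem fderiv_apply_eq_neg_of_eventuallyEq_const {X : V → V} (hX : DifferentiableAt ℝ X p)
    {c : W} (hc : (fun q => F q (X q)) =ᶠ[𝓝 p] fun _ => c) (x : V) :
    fderiv ℝ (fun q => F q (X p)) p x = -F p (fderiv ℝ X p x) := by
  have h := fderiv_apply_of_linearOn hs hp hFd hFl hX x
  rw [hc.fderiv_eq, fderiv_const_apply, zero_apply] at h
  exact eq_neg_of_add_eq_zero_left h.symm

end Calculus

section Algebra

variable {V : Type*} [NormedAddCommGroup V] [NormedSpace ℝ V] {s : Set V} {p : V}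

namespace IsConnectionOn

variable {Γ : V → V → V → V} (hΓ : IsConnectionOn s Γ) (hp : p ∈ s)
include hΓ hp

theorem map_add_left (u v w : V) : Γ p (u + v) w = Γ p u w + Γ p v w := (hΓ.2.1 p hp w).1 u v
theorem map_smul_left (t : ℝ) (u w : V) : Γ p (t • u) w = t • Γ p u w := (hΓ.2.1 p hp w).2 t u
theorem map_add_right (u v w : V) : Γ p u (v + w) = Γ p u v + Γ p u w := (hΓ.2.2 p hp u).1 v w
theorem map_smul_right (u : V) (t : ℝ) (v : V) : Γ p u (t • v) = t • Γ p u v :=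
  (hΓ.2.2 p hp u).2 t v
theorem map_sub_right (u v w : V) : Γ p u (v - w) = Γ p u v - Γ p u w :=
  (IsLinearMap.mk' _ (hΓ.2.2 p hp u)).map_sub v w
theorem map_zero_right (u : V) : Γ p u 0 = 0 := (IsLinearMap.mk' _ (hΓ.2.2 p hp u)).map_zero

end IsConnectionOn

namespace IsMetricOn

variable {g : V → V → V → ℝ} (hg : IsMetricOn s g) (hp : p ∈ s)
include hg hp

theorem symm (u v : V) : g p u v = g p v u := hg.2.1 p hp u v
theorem add_left (u v w : V) : g p (u + v) w = g p u w + g p v w := (hg.2.2.1 p hp w).1 u v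
theorem smul_left (t : ℝ) (u w : V) : g p (t • u) w = t * g p u w := (hg.2.2.1 p hp w).2 t u
theorem sub_left (u v w : V) : g p (u - v) w = g p u w - g p v w :=
  (IsLinearMap.mk' _ (hg.2.2.1 p hp w)).map_sub u v
theorem neg_left (u w : V) : g p (-u) w = -g p u w :=
  (IsLinearMap.mk' _ (hg.2.2.1 p hp w)).map_neg u
theorem zero_left (w : V) : g p 0 w = 0 := (IsLinearMap.mk' _ (hg.2.2.1 p hp w)).map_zero

theorem isLinearMap_right_s11 (u : V) : IsLinearMap ℝ (g p u) := by
  rw [show g p u = fun v => g p v u from funext (hg.symm hp u)]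
  exact hg.2.2.1 p hp u

theorem add_right (u v w : V) : g p u (v + w) = g p u v + g p u w :=
  (hg.isLinearMap_right_s11 hp u).1 v w
theorem smul_right (t : ℝ) (u w : V) : g p u (t • w) = t * g p u w :=
  (hg.isLinearMap_right_s11 hp u).2 t w
theorem sub_right (u v w : V) : g p u (v - w) = g p u v - g p u w :=
  (IsLinearMap.mk' _ (hg.isLinearMap_right_s11 hp u)).map_sub v w
theorem neg_right (u w : V) : g p u (-w) = -g p u w :=
  (IsLinearMap.mk' _ (hg.isLinearMap_right_s11 hp u)).map_neg w
theorem zero_right (u : V) : g p u 0 = 0 := (IsLinearMap.mk' _ (hg.isLinearMap_right_s11 hp u)).map_zero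

theorem eq_zero_of_forall {z : V} (h : ∀ w, g p z w = 0) : z = 0 := by
  by_contra hz
  simpa [h z] using hg.2.2.2 p hp z hz

end IsMetricOn

namespace ACM

variable {s : Set V} (S : ACM s) (hp : p ∈ s)
include hp

theorem eta_add (u v : V) : S.eta p (u + v) = S.eta p u + S.eta p v := (S.lin_eta p hp).1 u v
theorem eta_smul (t : ℝ) (u : V) : S.eta p (t • u) = t * S.eta p u := (S.lin_eta p hp).2 t u
theorem eta_sub (u v : V) : S.eta p (u - v) = S.eta p u - S.eta p v :=
  (IsLinearMap.mk' _ (S.lin_eta p hp)).map_sub u v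

theorem phi_add (u v : V) : S.phi p (u + v) = S.phi p u + S.phi p v := (S.lin_phi p hp).1 u v
theorem phi_smul (t : ℝ) (u : V) : S.phi p (t • u) = t • S.phi p u := (S.lin_phi p hp).2 t u
theorem phi_sub (u v : V) : S.phi p (u - v) = S.phi p u - S.phi p v :=
  (IsLinearMap.mk' _ (S.lin_phi p hp)).map_sub u v
theorem phi_neg (u : V) : S.phi p (-u) = -S.phi p u :=
  (IsLinearMap.mk' _ (S.lin_phi p hp)).map_neg u
theorem phi_zero : S.phi p 0 = 0 := (IsLinearMap.mk' _ (S.lin_phi p hp)).map_zero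

theorem xi_ne_zero : S.xi p ≠ 0 := by
  intro h
  have h0 : S.eta p 0 = 0 := (IsLinearMap.mk' _ (S.lin_eta p hp)).map_zero
  simpa [h, h0] using S.eta_xi p hp

theorem eq_eta_smul_xi_of_phi_eq_zero {z : V} (h : S.phi p z = 0) : z = S.eta p z • S.xi p := by
  have h2 := S.phi_sq p hp z
  rw [h, S.phi_zero hp] at h2
  linear_combination (norm := module) h2

theorem phi_xi_s11 : S.phi p (S.xi p) = 0 := by
  have h1 : S.phi p (S.phi p (S.xi p)) = 0 := by
    rw [S.phi_sq p hp, S.eta_xi p hp, one_smul, neg_add_cancel]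
  have h2 := S.eq_eta_smul_xi_of_phi_eq_zero hp h1
  set t := S.eta p (S.phi p (S.xi p))
  have h3 : S.phi p (S.phi p (S.xi p)) = (t * t) • S.xi p := by
    rw [h2, S.phi_smul hp, h2, smul_smul]
  rw [h1, eq_comm, smul_eq_zero] at h3
  rcases h3 with h | h
  · rw [h2, mul_self_eq_zero.mp h, zero_smul]
  · exact absurd h (S.xi_ne_zero hp)

theorem eta_phi (u : V) : S.eta p (S.phi p u) = 0 := by
  have h1 := S.phi_sq p hp (S.phi p u)
  rw [S.phi_sq p hp u, S.phi_add hp, S.phi_neg hp, S.phi_smul hp, S.phi_xi_s11 hp, smul_zero,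
    add_zero, left_eq_add, smul_eq_zero] at h1
  exact h1.resolve_right (S.xi_ne_zero hp)

theorem eta_eq_g_xi (u : V) : S.eta p u = S.g p u (S.xi p) := by
  have := S.compat p hp u (S.xi p)
  rw [S.phi_xi_s11 hp, S.metric.zero_right hp, S.eta_xi p hp] at this
  linarith

theorem g_xi_xi : S.g p (S.xi p) (S.xi p) = 1 := by
  rw [← S.eta_eq_g_xi hp, S.eta_xi p hp]

theorem g_phi_left (u v : V) : S.g p (S.phi p u) v = -S.g p u (S.phi p v) := by
  have h := S.compat p hp (S.phi p u) v
  rw [S.eta_phi hp, zero_mul, sub_zero, S.phi_sq p hp u, S.metric.add_left hp,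
    S.metric.smul_left hp, S.metric.symm hp (S.xi p), ← S.eta_eq_g_xi hp, S.eta_phi hp,
    mul_zero, add_zero, S.metric.neg_left hp] at h
  linarith

end ACM

end Algebra

section Covariant

variable {V : Type*} [NormedAddCommGroup V] [NormedSpace ℝ V]
  {W : Type*} [NormedAddCommGroup W] [NormedSpace ℝ W]
  {s : Set V} {p : V} {Γ : V → V → V → V}

theorem IsConnectionOn.differentiableAt (hΓ : IsConnectionOn s Γ) (hs : IsOpen s) (hp : p ∈ s)
    (u v : V) : DifferentiableAt ℝ (fun q => Γ q u v) p :=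
  differentiableAt_of_contDiffOn hs hp (hΓ.1 u v)

theorem IsConnectionOn.congr {Γ' : V → V → V → V} (hΓ : IsConnectionOn s Γ)
    (h : ∀ q ∈ s, ∀ u v, Γ q u v = Γ' q u v) : IsConnectionOn s Γ' :=
  ⟨fun u v => (hΓ.1 u v).congr fun q hq => (h q hq u v).symm,
    fun q hq v => by simpa only [h q hq] using hΓ.2.1 q hq v,
    fun q hq u => by simpa only [h q hq] using hΓ.2.2 q hq u⟩

theorem cov_const (v : V) (u : V) : cov Γ (fun _ => v) p u = Γ p u v := by
  simp [cov]

theorem cov_congr {X Y : V → V} (h : X =ᶠ[𝓝 p] Y) (u : V) : cov Γ X p u = cov Γ Y p u := by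
  simp [cov, h.fderiv_eq, h.eq_of_nhds]

theorem cov_sub (hΓ : IsConnectionOn s Γ) (hp : p ∈ s) {X Y : V → V}
    (hX : DifferentiableAt ℝ X p) (hY : DifferentiableAt ℝ Y p) (u : V) :
    cov Γ (fun q => X q - Y q) p u = cov Γ X p u - cov Γ Y p u := by
  simp only [cov, fderiv_fun_sub hX hY, sub_apply, hΓ.map_sub_right hp]
  abel

theorem cov_smul (hΓ : IsConnectionOn s Γ) (hp : p ∈ s) {f : V → ℝ} {X : V → V}
    (hf : DifferentiableAt ℝ f p) (hX : DifferentiableAt ℝ X p) (u : V) :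
    cov Γ (fun q => f q • X q) p u = fderiv ℝ f p u • X p + f p • cov Γ X p u := by
  simp only [cov, fderiv_fun_smul hf hX, add_apply,
    smul_apply, ContinuousLinearMap.smulRight_apply, hΓ.map_smul_right hp,
    smul_add]
  abel

theorem IsMetricOn.differentiableAt {g : V → V → V → ℝ} (hg : IsMetricOn s g) (hs : IsOpen s)
    (hp : p ∈ s) (u v : V) : DifferentiableAt ℝ (fun q => g q u v) p :=
  differentiableAt_of_contDiffOn hs hp (hg.1 u v)

def IsMetricConnOn (s : Set V) (g : V → V → V → ℝ) (Γ : V → V → V → V) : Prop :=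
  ∀ p ∈ s, ∀ u v w : V, fderiv ℝ (fun q => g q v w) p u = g p (Γ p u v) w + g p v (Γ p u w)

theorem IsLeviCivitaOn.isMetricConnOn {g : V → V → V → ℝ} (hΓ : IsLeviCivitaOn s g Γ) :
    IsMetricConnOn s g Γ :=
  hΓ.2.2

variable [FiniteDimensional ℝ V]

theorem fderiv_cov_apply (hΓ : IsConnectionOn s Γ) (hs : IsOpen s) (hp : p ∈ s) {X : V → V}
    (hX : ContDiffOn ℝ (⊤ : ℕ∞) X s) (u v : V) :
    fderiv ℝ (fun q => cov Γ X q v) p u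
      = fderiv ℝ (fun q => fderiv ℝ X q v) p u + fderiv ℝ (fun q => Γ q v (X p)) p u
        + Γ p v (fderiv ℝ X p u) := by
  have hXd := differentiableAt_of_contDiffOn hs hp hX
  have hΓd := hΓ.differentiableAt hs hp v
  have hΓl : ∀ q ∈ s, IsLinearMap ℝ (Γ q v) := fun q hq => hΓ.2.2 q hq v
  simp only [cov]
  rw [fderiv_fun_add (differentiableAt_fderiv_apply_of_contDiffOn hs hp hX v)
    (differentiableAt_apply_of_linearOn hs hp hΓd hΓl hXd), add_apply,
    fderiv_apply_of_linearOn hs hp hΓd hΓl hXd, add_assoc]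

theorem Rm_apply_eq_cov_cov (hΓ : IsConnectionOn s Γ) (hs : IsOpen s) (hp : p ∈ s) {X : V → V}
    (hX : ContDiffOn ℝ (⊤ : ℕ∞) X s) (u v : V) :
    Rm Γ p u v (X p) = cov Γ (fun q => cov Γ X q v) p u - cov Γ (fun q => cov Γ X q u) p v := by
  have hcc (a b : V) : cov Γ (fun q => cov Γ X q b) p a
      = fderiv ℝ (fun q => fderiv ℝ X q b) p a + fderiv ℝ (fun q => Γ q b (X p)) p a
        + Γ p b (fderiv ℝ X p a) + Γ p a (fderiv ℝ X p b + Γ p b (X p)) := by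
    rw [cov, fderiv_cov_apply hΓ hs hp hX]
    rfl
  rw [hcc, hcc, fderiv_fderiv_apply_comm hs hp hX u v, Rm, hΓ.map_add_right hp,
    hΓ.map_add_right hp]
  abel

theorem IsMetricOn.differentiableAt_apply_right {g : V → V → V → ℝ} (hg : IsMetricOn s g)
    (hs : IsOpen s) (hp : p ∈ s) (u : V) {Y : V → V} (hY : DifferentiableAt ℝ Y p) :
    DifferentiableAt ℝ (fun q => g q u (Y q)) p :=
  differentiableAt_apply_of_linearOn hs hp (hg.differentiableAt hs hp u)
    (fun _ hq => hg.isLinearMap_right_s11 hq u) hY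

theorem IsMetricOn.differentiableAt_apply_left {g : V → V → V → ℝ} (hg : IsMetricOn s g)
    (hs : IsOpen s) (hp : p ∈ s) (w : V) {X : V → V} (hX : DifferentiableAt ℝ X p) :
    DifferentiableAt ℝ (fun q => g q (X q) w) p :=
  differentiableAt_apply_of_linearOn hs hp (F := fun q u => g q u w)
    (fun u => hg.differentiableAt hs hp u w) (fun q hq => hg.2.2.1 q hq w) hX

theorem IsMetricConnOn.fderiv_apply {g : V → V → V → ℝ} (hΓ : IsMetricConnOn s g Γ)
    (hg : IsMetricOn s g) (hs : IsOpen s) (hp : p ∈ s) {X Y : V → V}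
    (hX : DifferentiableAt ℝ X p) (hY : DifferentiableAt ℝ Y p) (x : V) :
    fderiv ℝ (fun q => g q (X q) (Y q)) p x
      = g p (cov Γ X p x) (Y p) + g p (X p) (cov Γ Y p x) := by
  have hgY := fderiv_apply_of_linearOn hs hp (F := fun q u => g q u (Y q))
    (fun u => hg.differentiableAt_apply_right hs hp u hY) (fun q hq => hg.2.2.1 q hq (Y q)) hX x
  rw [hgY, fderiv_apply_of_linearOn hs hp (hg.differentiableAt hs hp (X p))
    (fun q hq => hg.isLinearMap_right_s11 hq (X p)) hY x, hΓ p hp x, cov, cov,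
    hg.add_left hp, hg.add_right hp]
  ring

end Covariant

section Curvature

variable {V : Type*} [NormedAddCommGroup V] [NormedSpace ℝ V]
  {s : Set V} {p : V} {Γ : V → V → V → V}

theorem Rm_swap (u v w : V) : Rm Γ p u v w = -Rm Γ p v u w := by
  simp only [Rm]
  abel

theorem Rm_eq_cov_sub_cov (u v w : V) :
    Rm Γ p u v w = cov Γ (fun q => Γ q v w) p u - cov Γ (fun q => Γ q u w) p v := by
  simp only [Rm, cov]
  abel

theorem Rm_congr {Γ' : V → V → V → V} (hs : IsOpen s) (h : ∀ q ∈ s, ∀ u v, Γ q u v = Γ' q u v)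
    (hp : p ∈ s) (u v w : V) : Rm Γ p u v w = Rm Γ' p u v w := by
  have e (a b : V) : (fun q => Γ q a b) =ᶠ[𝓝 p] fun q => Γ' q a b := by
    filter_upwards [hs.mem_nhds hp] with q hq using h q hq a b
  simp only [Rm, (e _ _).fderiv_eq, h p hp]

theorem covT3_congr {Γ' : V → V → V → V} (hs : IsOpen s)
    (h : ∀ q ∈ s, ∀ u v, Γ q u v = Γ' q u v) (hp : p ∈ s) (x u v w : V) :
    covT3 Γ (Rm Γ) p x u v w = covT3 Γ' (Rm Γ') p x u v w := by
  have e : (fun q => Rm Γ q u v w) =ᶠ[𝓝 p] fun q => Rm Γ' q u v w := by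
    filter_upwards [hs.mem_nhds hp] with q hq using Rm_congr hs h hq u v w
  simp only [covT3, e.fderiv_eq, h p hp, Rm_congr hs h hp]

theorem Rm_add_cyclic_of_symm (hs : IsOpen s) (hsymm : ∀ q ∈ s, ∀ u v, Γ q u v = Γ q v u)
    (hp : p ∈ s) (u v w : V) : Rm Γ p u v w + Rm Γ p v w u + Rm Γ p w u v = 0 := by
  have e (a b : V) : (fun q => Γ q a b) =ᶠ[𝓝 p] fun q => Γ q b a := by
    filter_upwards [hs.mem_nhds hp] with q hq using hsymm q hq a b
  simp only [Rm]
  rw [(e w u).fderiv_eq, (e v u).fderiv_eq, (e w v).fderiv_eq, hsymm p hp w u,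
    hsymm p hp v u, hsymm p hp w v]
  abel

theorem ParallelCurv.of_flatCurv (hs : IsOpen s) (hΓ : IsConnectionOn s Γ)
    (hflat : FlatCurv s Γ) : ParallelCurv s Γ := by
  intro p hp x u v w
  have e : (fun q => Rm Γ q u v w) =ᶠ[𝓝 p] fun _ => 0 := by
    filter_upwards [hs.mem_nhds hp] with q hq using hflat q hq u v w
  simp [covT3, e.fderiv_eq, hflat p hp, hΓ.map_zero_right hp]

variable [FiniteDimensional ℝ V] (hΓ : IsConnectionOn s Γ) (hs : IsOpen s)
include hΓ hs

theorem isLinearMap_Rm_right (hp : p ∈ s) (u v : V) : IsLinearMap ℝ (Rm Γ p u v) := by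
  have h (a b : V) := isLinearMap_fderiv_apply_of_linearOn hs hp (hΓ.differentiableAt hs hp a)
    (fun q hq => hΓ.2.2 q hq a) b
  constructor
  · intro a b
    simp only [Rm, (h v u).map_add, (h u v).map_add, hΓ.map_add_right hp]
    abel
  · intro t a
    simp only [Rm, (h v u).map_smul, (h u v).map_smul, hΓ.map_smul_right hp]
    module

theorem isLinearMap_Rm_left (hp : p ∈ s) (v w : V) : IsLinearMap ℝ (fun u => Rm Γ p u v w) := by
  have h := isLinearMap_fderiv_apply_of_linearOn hs hp (F := fun q u => Γ q u w)
    (fun a => hΓ.differentiableAt hs hp a w) (fun q hq => hΓ.2.1 q hq w) v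
  constructor
  · intro a b
    simp only [Rm, h.map_add, map_add, hΓ.map_add_left hp, hΓ.map_add_right hp]
    abel
  · intro t a
    simp only [Rm, h.map_smul, map_smul, hΓ.map_smul_left hp, hΓ.map_smul_right hp]
    module

theorem Rm_sub_left (hp : p ∈ s) (a b v w : V) :
    Rm Γ p (a - b) v w = Rm Γ p a v w - Rm Γ p b v w :=
  (IsLinearMap.mk' _ (isLinearMap_Rm_left hΓ hs hp v w)).map_sub a b

theorem Rm_smul_left (hp : p ∈ s) (t : ℝ) (u v w : V) :
    Rm Γ p (t • u) v w = t • Rm Γ p u v w :=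
  (isLinearMap_Rm_left hΓ hs hp v w).map_smul t u

theorem Rm_sub_right (hp : p ∈ s) (u v a b : V) :
    Rm Γ p u v (a - b) = Rm Γ p u v a - Rm Γ p u v b :=
  (IsLinearMap.mk' _ (isLinearMap_Rm_right hΓ hs hp u v)).map_sub a b

theorem Rm_smul_right (hp : p ∈ s) (u v : V) (t : ℝ) (w : V) :
    Rm Γ p u v (t • w) = t • Rm Γ p u v w :=
  (isLinearMap_Rm_right hΓ hs hp u v).map_smul t w

theorem differentiableAt_Rm (hp : p ∈ s) (u v w : V) :
    DifferentiableAt ℝ (fun q => Rm Γ q u v w) p := by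
  have hΓl (a : V) : ∀ q ∈ s, IsLinearMap ℝ (Γ q a) := fun q hq => hΓ.2.2 q hq a
  exact (((differentiableAt_fderiv_apply_of_contDiffOn hs hp (hΓ.1 v w) u).sub
    (differentiableAt_fderiv_apply_of_contDiffOn hs hp (hΓ.1 u w) v)).add
    (differentiableAt_apply_of_linearOn hs hp (hΓ.differentiableAt hs hp u) (hΓl u)
      (hΓ.differentiableAt hs hp v w))).sub
    (differentiableAt_apply_of_linearOn hs hp (hΓ.differentiableAt hs hp v) (hΓl v)
      (hΓ.differentiableAt hs hp u w))

theorem fderiv_Rm (hp : p ∈ s) (u v w x : V) :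
    fderiv ℝ (fun q => Rm Γ q u v w) p x
      = fderiv ℝ (fun q => fderiv ℝ (fun r => Γ r v w) q u) p x
        - fderiv ℝ (fun q => fderiv ℝ (fun r => Γ r u w) q v) p x
        + (fderiv ℝ (fun q => Γ q u (Γ p v w)) p x + Γ p u (fderiv ℝ (fun q => Γ q v w) p x))
        - (fderiv ℝ (fun q => Γ q v (Γ p u w)) p x + Γ p v (fderiv ℝ (fun q => Γ q u w) p x)) := by
  have hd1 := differentiableAt_fderiv_apply_of_contDiffOn hs hp (hΓ.1 v w) u
  have hd2 := differentiableAt_fderiv_apply_of_contDiffOn hs hp (hΓ.1 u w) v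
  have hΓl (a : V) : ∀ q ∈ s, IsLinearMap ℝ (Γ q a) := fun q hq => hΓ.2.2 q hq a
  have hΓΓ (a b c : V) := fderiv_apply_of_linearOn hs hp (hΓ.differentiableAt hs hp a) (hΓl a)
    (hΓ.differentiableAt hs hp b c)
  have hdΓΓ (a b c : V) := differentiableAt_apply_of_linearOn hs hp
    (hΓ.differentiableAt hs hp a) (hΓl a) (hΓ.differentiableAt hs hp b c)
  simp only [Rm]
  rw [fderiv_fun_sub ((hd1.fun_sub hd2).fun_add (hdΓΓ u v w)) (hdΓΓ v u w),
    fderiv_fun_add (hd1.fun_sub hd2) (hdΓΓ u v w), fderiv_fun_sub hd1 hd2, sub_apply,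
    add_apply, sub_apply, hΓΓ, hΓΓ]

theorem covT3_add_cyclic (hp : p ∈ s) (x u v w : V) :
    covT3 Γ (Rm Γ) p x u v w + covT3 Γ (Rm Γ) p u v x w + covT3 Γ (Rm Γ) p v x u w
      + Rm Γ p (Γ p x u - Γ p u x) v w + Rm Γ p (Γ p u v - Γ p v u) x w
      + Rm Γ p (Γ p v x - Γ p x v) u w = 0 := by
  simp only [covT3, fderiv_Rm hΓ hs hp, Rm_sub_left hΓ hs hp]
  simp only [Rm, hΓ.map_sub_right hp, hΓ.map_add_right hp]
  linear_combination (norm := module) fderiv_fderiv_apply_comm hs hp (hΓ.1 v w) x u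
    + fderiv_fderiv_apply_comm hs hp (hΓ.1 x w) u v + fderiv_fderiv_apply_comm hs hp (hΓ.1 u w) v x

end Curvature

section MetricCurvature

variable {V : Type*} [NormedAddCommGroup V] [NormedSpace ℝ V]
  {s : Set V} {p : V} {g : V → V → V → ℝ} {Γ : V → V → V → V}
  (hg : IsMetricOn s g) (hs : IsOpen s)
include hg hs

theorem LocallySymmetricOn.of_constCurvOn (hΓ : IsConnectionOn s Γ)
    (hmet : IsMetricConnOn s g Γ) {k : ℝ} (hk : ConstCurvOn s g Γ k) :
    LocallySymmetricOn s Γ := by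
  intro p hp x u v w
  have e : (fun q => Rm Γ q u v w) =ᶠ[𝓝 p] fun q => k • (g q v w • u - g q u w • v) := by
    filter_upwards [hs.mem_nhds hp] with q hq using hk q hq u v w
  have hd1 := (hg.differentiableAt hs hp v w).smul_const u
  have hd2 := (hg.differentiableAt hs hp u w).smul_const v
  simp only [covT3, e.fderiv_eq, hk p hp]
  rw [fderiv_fun_const_smul (hd1.fun_sub hd2), smul_apply, fderiv_fun_sub hd1 hd2, sub_apply,
    fderiv_smul_const (hg.differentiableAt hs hp v w),
    fderiv_smul_const (hg.differentiableAt hs hp u w)]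
  simp only [ContinuousLinearMap.smulRight_apply, hmet p hp, hΓ.map_smul_right hp,
    hΓ.map_sub_right hp]
  module

variable [FiniteDimensional ℝ V]

theorem IsMetricConnOn.fderiv_fderiv_g (hΓ : IsConnectionOn s Γ) (hmet : IsMetricConnOn s g Γ)
    (hp : p ∈ s) (a b v w : V) :
    fderiv ℝ (fun q => fderiv ℝ (fun r => g r v w) q b) p a
      = g p (cov Γ (fun q => Γ q b v) p a) w + g p v (cov Γ (fun q => Γ q b w) p a)
        + (g p (Γ p b v) (Γ p a w) + g p (Γ p a v) (Γ p b w)) := by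
  have e : (fun q => fderiv ℝ (fun r => g r v w) q b)
      =ᶠ[𝓝 p] fun q => g q (Γ q b v) w + g q v (Γ q b w) := by
    filter_upwards [hs.mem_nhds hp] with q hq using hmet q hq b v w
  have hd := hΓ.differentiableAt hs hp b
  rw [e.fderiv_eq, fderiv_fun_add (hg.differentiableAt_apply_left hs hp w (hd v))
      (hg.differentiableAt_apply_right hs hp v (hd w)), add_apply,
    hmet.fderiv_apply hg hs hp (hd v) (differentiableAt_const w),
    hmet.fderiv_apply hg hs hp (differentiableAt_const v) (hd w), cov_const, cov_const]
  ring

theorem IsMetricConnOn.g_Rm_add_g_Rm (hΓ : IsConnectionOn s Γ) (hmet : IsMetricConnOn s g Γ)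
    (hp : p ∈ s) (u x v w : V) : g p (Rm Γ p u x v) w + g p v (Rm Γ p u x w) = 0 := by
  have h := fderiv_fderiv_apply_comm hs hp (hg.1 v w) u x
  rw [hmet.fderiv_fderiv_g hg hs hΓ hp, hmet.fderiv_fderiv_g hg hs hΓ hp] at h
  rw [Rm_eq_cov_sub_cov, Rm_eq_cov_sub_cov, hg.sub_left hp, hg.sub_right hp]
  linarith

theorem IsLeviCivitaOn.g_Rm_comm (hΓ : IsLeviCivitaOn s g Γ) (hp : p ∈ s) (x y z t : V) :
    g p (Rm Γ p x y z) t = g p (Rm Γ p z t x) y := by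
  have B (a b c d : V) :
      g p (Rm Γ p a b c) d + g p (Rm Γ p b c a) d + g p (Rm Γ p c a b) d = 0 := by
    rw [← hg.add_left hp, ← hg.add_left hp, Rm_add_cyclic_of_symm hs hΓ.2.1 hp, hg.zero_left hp]
  have L (a b c d : V) : g p (Rm Γ p a b c) d = -g p (Rm Γ p a b d) c := by
    have := IsMetricConnOn.g_Rm_add_g_Rm hg hs hΓ.1 hΓ.isMetricConnOn hp a b c d
    rw [hg.symm hp c] at this
    linarith
  have F (a b c d : V) : g p (Rm Γ p a b c) d = -g p (Rm Γ p b a c) d := by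
    rw [Rm_swap, hg.neg_left hp]
  linarith [B z x y t, B x y t z, B y t z x, B t z x y, L x y t z, L y t x z,
    F t x y z, L x t y z, L t z y x, L z x t y, L z y t x, F z y x t, F t z x y]

end MetricCurvature

section Kenmotsu

variable {V : Type*} [NormedAddCommGroup V] [NormedSpace ℝ V]
  {s : Set V} {p : V} (S : ACM s) (hs : IsOpen s)
include hs

namespace ACM

theorem differentiableAt_phi (hp : p ∈ s) (u : V) : DifferentiableAt ℝ (fun q => S.phi q u) p :=
  differentiableAt_of_contDiffOn hs hp (S.smooth_phi u)

theorem differentiableAt_eta (hp : p ∈ s) (u : V) : DifferentiableAt ℝ (fun q => S.eta q u) p :=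
  differentiableAt_of_contDiffOn hs hp (S.smooth_eta u)

theorem differentiableAt_xi (hp : p ∈ s) : DifferentiableAt ℝ S.xi p :=
  differentiableAt_of_contDiffOn hs hp S.smooth_xi

variable [FiniteDimensional ℝ V]

theorem fderiv_phi_xi (hp : p ∈ s) (x : V) :
    fderiv ℝ (fun q => S.phi q (S.xi p)) p x = -S.phi p (fderiv ℝ S.xi p x) :=
  fderiv_apply_eq_neg_of_eventuallyEq_const hs hp (S.differentiableAt_phi hs hp) S.lin_phi
    (S.differentiableAt_xi hs hp) (c := 0)
    (by filter_upwards [hs.mem_nhds hp] with q hq using S.phi_xi_s11 hq) x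

theorem eta_fderiv_phi (hp : p ∈ s) (v x : V) :
    S.eta p (fderiv ℝ (fun q => S.phi q v) p x) = -fderiv ℝ (fun q => S.eta q (S.phi p v)) p x := by
  rw [fderiv_apply_eq_neg_of_eventuallyEq_const hs hp (S.differentiableAt_eta hs hp) S.lin_eta
    (S.differentiableAt_phi hs hp v) (c := 0)
    (by filter_upwards [hs.mem_nhds hp] with q hq using S.eta_phi hq v) x, neg_neg]

theorem eta_fderiv_xi (hp : p ∈ s) (x : V) :
    S.eta p (fderiv ℝ S.xi p x) = -fderiv ℝ (fun q => S.eta q (S.xi p)) p x := by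
  rw [fderiv_apply_eq_neg_of_eventuallyEq_const hs hp (S.differentiableAt_eta hs hp) S.lin_eta
    (S.differentiableAt_xi hs hp) (c := 1)
    (by filter_upwards [hs.mem_nhds hp] with q hq using S.eta_xi q hq) x, neg_neg]

theorem fderiv_FPhi_xi (hp : p ∈ s) (w x : V) :
    fderiv ℝ (fun q => FPhi S q (S.xi p) w) p x = -S.g p (fderiv ℝ S.xi p x) (S.phi p w) :=
  fderiv_apply_eq_neg_of_eventuallyEq_const hs hp (F := fun q y => S.g q y (S.phi q w))
    (fun y => S.metric.differentiableAt_apply_right hs hp y (S.differentiableAt_phi hs hp w))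
    (fun q hq => S.metric.2.2.1 q hq _) (S.differentiableAt_xi hs hp) (c := 0)
    (by filter_upwards [hs.mem_nhds hp] with q hq
        rw [S.metric.symm hq, ← S.eta_eq_g_xi hq, S.eta_phi hq]) x

end ACM

variable [FiniteDimensional ℝ V] {S} {α : ℝ} (hAK : IsAK s S α) (hN : IsNormal s S)
include hAK hN

/-- Normality together with `dη = 0` forces `L_ξ φ = 0`: the Nijenhuis tensor `N(ξ, v)` is
`-φ (L_ξ φ) v`, while `η ((L_ξ φ) v)` is `-dη(ξ, φ v)`. -/
theorem IsAK.lieXiPhi_eq_zero (hp : p ∈ s) (v : V) : lieXiPhi S.phi S.xi p v = 0 := by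
  have hnij : nijPhi S.phi p (S.xi p) v = 0 := by
    simpa [hAK.deta p hp] using hN p hp (S.xi p) v
  have hφ : S.phi p (lieXiPhi S.phi S.xi p v) = 0 := by
    simp only [nijPhi, S.phi_xi_s11 hp, map_zero, S.fderiv_phi_xi hs hp, S.phi_neg hp] at hnij
    simp only [lieXiPhi, S.phi_add hp, S.phi_sub hp]
    linear_combination (norm := module) -hnij
  have hη : S.eta p (lieXiPhi S.phi S.xi p v) = 0 := by
    have hde := hAK.deta p hp (S.xi p) (S.phi p v)
    simp only [dEta] at hde
    rw [lieXiPhi, S.eta_add hp, S.eta_sub hp, S.eta_phi hp, S.eta_fderiv_phi hs hp,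
      S.eta_fderiv_xi hs hp]
    linarith
  rw [S.eq_eta_smul_xi_of_phi_eq_zero hp hφ, hη, zero_smul]

theorem IsAK.hpr_eq_zero (hp : p ∈ s) (u : V) : hpr α S.phi S.xi p u = 0 := by
  rw [hpr, hAK.lieXiPhi_eq_zero hs hN hp, smul_zero]

end Kenmotsu

section KenmotsuLeviCivita

variable {V : Type*} [NormedAddCommGroup V] [NormedSpace ℝ V] [FiniteDimensional ℝ V]
  {s : Set V} {p : V} {S : ACM s} {Γ : V → V → V → V} (hs : IsOpen s)
  (hΓ : IsLeviCivitaOn s S.g Γ)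
include hs hΓ

theorem IsLeviCivitaOn.fderiv_eta_eq_add_g_cov_xi (hp : p ∈ s) (x y : V) :
    fderiv ℝ (fun q => S.eta q y) p x = S.eta p (Γ p x y) + S.g p (cov Γ S.xi p x) y := by
  have e : (fun q => S.eta q y) =ᶠ[𝓝 p] fun q => S.g q y (S.xi q) := by
    filter_upwards [hs.mem_nhds hp] with q hq using S.eta_eq_g_xi hq y
  rw [e.fderiv_eq, IsMetricConnOn.fderiv_apply (X := fun _ => y) hΓ.isMetricConnOn S.metric hs hp
    (differentiableAt_const y) (S.differentiableAt_xi hs hp), cov_const,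
    ← S.eta_eq_g_xi hp, S.metric.symm hp y]

theorem IsLeviCivitaOn.g_cov_xi_xi (hp : p ∈ s) (x : V) : S.g p (cov Γ S.xi p x) (S.xi p) = 0 := by
  have e : (fun q => S.g q (S.xi q) (S.xi q)) =ᶠ[𝓝 p] fun _ => 1 := by
    filter_upwards [hs.mem_nhds hp] with q hq using S.g_xi_xi hq
  have h := hΓ.isMetricConnOn.fderiv_apply S.metric hs hp (S.differentiableAt_xi hs hp)
    (S.differentiableAt_xi hs hp) x
  rw [e.fderiv_eq, fderiv_const_apply, zero_apply, S.metric.symm hp (S.xi p)] at h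
  linarith

theorem IsLeviCivitaOn.g_cov_xi_comm {α : ℝ} (hAK : IsAK s S α) (hp : p ∈ s) (x y : V) :
    S.g p (cov Γ S.xi p x) y = S.g p (cov Γ S.xi p y) x := by
  have h := hAK.deta p hp x y
  rw [dEta, hΓ.fderiv_eta_eq_add_g_cov_xi hs hp, hΓ.fderiv_eta_eq_add_g_cov_xi hs hp,
    hΓ.2.1 p hp x y] at h
  linarith

variable {α : ℝ} (hAK : IsAK s S α) (hN : IsNormal s S)
include hAK hN

theorem IsLeviCivitaOn.fderiv_FPhi_xi_dir (hp : p ∈ s) (u v : V) :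
    fderiv ℝ (fun q => FPhi S q u v) p (S.xi p)
      = S.g p (Γ p u (S.xi p)) (S.phi p v) + S.g p u (cov Γ S.xi p (S.phi p v))
        - S.g p u (S.phi p (fderiv ℝ S.xi p v)) := by
  have hlie := hAK.lieXiPhi_eq_zero hs hN hp v
  rw [lieXiPhi] at hlie
  have hcov : cov Γ (fun q => S.phi q v) p (S.xi p)
      = cov Γ S.xi p (S.phi p v) - S.phi p (fderiv ℝ S.xi p v) := by
    simp only [cov, hΓ.2.1 p hp (S.xi p)]
    linear_combination (norm := module) hlie
  simp only [FPhi]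
  rw [IsMetricConnOn.fderiv_apply (X := fun _ => u) hΓ.isMetricConnOn S.metric hs hp
    (differentiableAt_const u) (S.differentiableAt_phi hs hp v), cov_const, hcov,
    S.metric.sub_right hp, hΓ.2.1 p hp (S.xi p)]
  ring

/-- The ξ-component of `dΦ = 2α η ∧ Φ`, with `L_ξ φ = 0`. -/
theorem IsLeviCivitaOn.g_cov_xi_phi (hp : p ∈ s) (u v : V) :
    S.g p (cov Γ S.xi p u) (S.phi p v) = α * S.g p u (S.phi p v) := by
  have h := hAK.dphi p hp (S.xi p) u v
  have hΦ (w : V) : FPhi S p (S.xi p) w = 0 := by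
    rw [FPhi, S.metric.symm hp, ← S.eta_eq_g_xi hp, S.eta_phi hp]
  rw [hΦ, hΦ, S.eta_xi p hp, hΓ.fderiv_FPhi_xi_dir hs hAK hN hp, S.fderiv_FPhi_xi hs hp,
    S.fderiv_FPhi_xi hs hp, FPhi] at h
  have h1 := hΓ.g_cov_xi_comm hs hAK hp (S.phi p v) u
  have h2 := S.g_phi_left hp u (fderiv ℝ S.xi p v)
  rw [S.metric.symm hp u (cov Γ S.xi p _), S.metric.symm hp _ (S.phi p u)] at h
  simp only [cov, S.metric.add_left hp] at h h1 ⊢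
  linarith

theorem IsLeviCivitaOn.cov_xi (hp : p ∈ s) (u : V) :
    cov Γ S.xi p u = α • (u - S.eta p u • S.xi p) := by
  have hg (w : V) : S.g p (cov Γ S.xi p u) w = α * (S.g p u w - S.eta p u * S.eta p w) := by
    have hw : w = S.eta p w • S.xi p - S.phi p (S.phi p w) := by
      rw [S.phi_sq p hp]
      module
    conv_lhs => rw [hw]
    rw [S.metric.sub_right hp, S.metric.smul_right hp, hΓ.g_cov_xi_xi hs hp,
      hΓ.g_cov_xi_phi hs hAK hN hp, S.phi_sq p hp, S.metric.add_right hp, S.metric.neg_right hp,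
      S.metric.smul_right hp, ← S.eta_eq_g_xi hp]
    ring
  refine sub_eq_zero.mp (S.metric.eq_zero_of_forall hp fun w => ?_)
  rw [S.metric.sub_left hp, hg, S.metric.smul_left hp, S.metric.sub_left hp,
    S.metric.smul_left hp, S.metric.symm hp (S.xi p), ← S.eta_eq_g_xi hp]
  ring

theorem IsLeviCivitaOn.fderiv_eta (hp : p ∈ s) (x w : V) :
    fderiv ℝ (fun q => S.eta q w) p x
      = S.eta p (Γ p x w) + α * (S.g p x w - S.eta p x * S.eta p w) := by
  rw [hΓ.fderiv_eta_eq_add_g_cov_xi hs hp, hΓ.cov_xi hs hAK hN hp, S.metric.smul_left hp,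
    S.metric.sub_left hp, S.metric.smul_left hp, S.metric.symm hp (S.xi p), ← S.eta_eq_g_xi hp]

theorem IsLeviCivitaOn.cov_cov_xi (hp : p ∈ s) (u v : V) :
    cov Γ (fun q => cov Γ S.xi q v) p u
      = α • Γ p u v - (α * fderiv ℝ (fun q => S.eta q v) p u) • S.xi p
        - (α * S.eta p v) • (α • (u - S.eta p u • S.xi p)) := by
  have e : (fun q => cov Γ S.xi q v) =ᶠ[𝓝 p]
      fun q => α • v - (α * S.eta q v) • S.xi q := by
    filter_upwards [hs.mem_nhds hp] with q hq
    rw [hΓ.cov_xi hs hAK hN hq]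
    module
  have hd := (S.differentiableAt_eta hs hp v).const_mul α
  rw [cov_congr e, cov_sub (X := fun _ => α • v) (Y := fun q => (α * S.eta q v) • S.xi q)
      hΓ.1 hp (differentiableAt_const _) (hd.smul (S.differentiableAt_xi hs hp)),
    cov_smul hΓ.1 hp hd (S.differentiableAt_xi hs hp), cov_const, hΓ.1.map_smul_right hp,
    fderiv_const_mul (S.differentiableAt_eta hs hp v), smul_apply, smul_eq_mul,
    hΓ.cov_xi hs hAK hN hp]
  abel

theorem IsLeviCivitaOn.Rm_xi (hp : p ∈ s) (u v : V) :
    Rm Γ p u v (S.xi p) = α ^ 2 • (S.eta p u • v - S.eta p v • u) := by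
  have hde := hAK.deta p hp u v
  rw [dEta, sub_eq_zero] at hde
  rw [Rm_apply_eq_cov_cov hΓ.1 hs hp S.smooth_xi, hΓ.cov_cov_xi hs hAK hN hp,
    hΓ.cov_cov_xi hs hAK hN hp, hde, hΓ.2.1 p hp u v]
  module

theorem IsLeviCivitaOn.Rm_xi_left (hp : p ∈ s) (u v : V) :
    Rm Γ p (S.xi p) u v = α ^ 2 • (S.eta p v • u - S.g p u v • S.xi p) := by
  refine sub_eq_zero.mp (S.metric.eq_zero_of_forall hp fun w => ?_)
  rw [S.metric.sub_left hp, hΓ.g_Rm_comm S.metric hs hp, hΓ.Rm_xi hs hAK hN hp]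
  simp only [S.metric.smul_left hp, S.metric.sub_left hp, S.metric.symm hp (S.xi p) w,
    ← S.eta_eq_g_xi hp, S.metric.symm hp w u, S.metric.symm hp v u]
  ring

theorem IsLeviCivitaOn.fderiv_Rm_apply_xi (hp : p ∈ s) (x u v : V) :
    fderiv ℝ (fun q => Rm Γ q u v (S.xi p)) p x
      = α ^ 2 • (fderiv ℝ (fun q => S.eta q u) p x • v - fderiv ℝ (fun q => S.eta q v) p x • u)
        - Rm Γ p u v (fderiv ℝ S.xi p x) := by
  have e : (fun q => Rm Γ q u v (S.xi q)) =ᶠ[𝓝 p]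
      fun q => α ^ 2 • (S.eta q u • v - S.eta q v • u) := by
    filter_upwards [hs.mem_nhds hp] with q hq using hΓ.Rm_xi hs hAK hN hq u v
  have h := fderiv_apply_of_linearOn hs hp (differentiableAt_Rm hΓ.1 hs hp u v)
    (fun q hq => isLinearMap_Rm_right hΓ.1 hs hq u v) (S.differentiableAt_xi hs hp) x
  have hd1 := (S.differentiableAt_eta hs hp u).smul_const v
  have hd2 := (S.differentiableAt_eta hs hp v).smul_const u
  rw [e.fderiv_eq, fderiv_fun_const_smul (hd1.fun_sub hd2), smul_apply, fderiv_fun_sub hd1 hd2,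
    sub_apply, fderiv_smul_const (S.differentiableAt_eta hs hp u),
    fderiv_smul_const (S.differentiableAt_eta hs hp v)] at h
  simp only [ContinuousLinearMap.smulRight_apply] at h
  rw [h]
  abel

/-- Local symmetry evaluated on `ξ`, together with `∇ξ = α (I - η ⊗ ξ)` and the formula for
`R(u,v)ξ`, leaves exactly `α (R(u,v)x + α² (g(v,x)u - g(u,x)v)) = 0`. -/
theorem IsLeviCivitaOn.constCurvOn_of_locallySymmetricOn (hsym : LocallySymmetricOn s Γ) :
    ConstCurvOn s S.g Γ (-α ^ 2) := by
  intro p hp u v x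
  have hcon := hΓ.1
  have h := hsym p hp x u v (S.xi p)
  rw [covT3, hΓ.fderiv_Rm_apply_xi hs hAK hN hp, hΓ.fderiv_eta hs hAK hN hp,
    hΓ.fderiv_eta hs hAK hN hp, hΓ.Rm_xi hs hAK hN hp, hΓ.Rm_xi hs hAK hN hp,
    hΓ.Rm_xi hs hAK hN hp, hcon.map_smul_right hp, hcon.map_sub_right hp,
    hcon.map_smul_right hp, hcon.map_smul_right hp, S.metric.symm hp x u,
    S.metric.symm hp x v] at h
  have hcov : Rm Γ p u v (fderiv ℝ S.xi p x) + Rm Γ p u v (Γ p x (S.xi p))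
      = α • Rm Γ p u v x - (α * S.eta p x) • Rm Γ p u v (S.xi p) := by
    have hξ := hΓ.cov_xi hs hAK hN hp x
    rw [cov] at hξ
    rw [← (isLinearMap_Rm_right hcon hs hp u v).map_add, hξ, Rm_smul_right hcon hs hp,
      Rm_sub_right hcon hs hp, Rm_smul_right hcon hs hp]
    module
  rw [hΓ.Rm_xi hs hAK hN hp] at hcov
  apply smul_right_injective V hAK.pos.ne'
  linear_combination (norm := module) -h - hcov

end KenmotsuLeviCivita

section Canonical

variable {V : Type*} [NormedAddCommGroup V] [NormedSpace ℝ V]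
  {s : Set V} {p : V} {S : ACM s} {α : ℝ} {Γ : V → V → V → V}

/-- The canonical connection `canonical α S Γ` with `h' = 0`. -/
def canonicalNormal (α : ℝ) (S : ACM s) (Γ : V → V → V → V) : V → V → V → V :=
  fun p u v => Γ p u v + (α * S.g p u v) • S.xi p - (α * S.eta p v) • u

theorem IsConnectionOn.canonicalNormal (hΓ : IsConnectionOn s Γ) :
    IsConnectionOn s (canonicalNormal α S Γ) := by
  refine ⟨fun u v => ?_, fun q hq v => ⟨fun a b => ?_, fun t a => ?_⟩,
    fun q hq u => ⟨fun a b => ?_, fun t a => ?_⟩⟩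
  · exact ((hΓ.1 u v).add (((S.metric.1 u v).const_smul α).smul S.smooth_xi)).sub
      (((S.smooth_eta v).const_smul α).smul contDiffOn_const)
  all_goals
    simp only [AKG.canonicalNormal, hΓ.map_add_left hq, hΓ.map_smul_left hq, hΓ.map_add_right hq,
      hΓ.map_smul_right hq, S.metric.add_left hq, S.metric.smul_left hq, S.metric.add_right hq,
      S.metric.smul_right hq, S.eta_add hq, S.eta_smul hq]
    module

theorem canonicalNormal_sub_swap (hΓ : IsLeviCivitaOn s S.g Γ) (hp : p ∈ s) (u v : V) :
    canonicalNormal α S Γ p u v - canonicalNormal α S Γ p v u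
      = (α * S.eta p u) • v - (α * S.eta p v) • u := by
  simp only [canonicalNormal, hΓ.2.1 p hp u v, S.metric.symm hp u v]
  abel

theorem fderiv_canonicalNormal (hs : IsOpen s) (hΓ : IsConnectionOn s Γ) (hp : p ∈ s)
    (x v w : V) :
    fderiv ℝ (fun q => canonicalNormal α S Γ q v w) p x
      = fderiv ℝ (fun q => Γ q v w) p x + (α * fderiv ℝ (fun q => S.g q v w) p x) • S.xi p
        + (α * S.g p v w) • fderiv ℝ S.xi p x - (α * fderiv ℝ (fun q => S.eta q w) p x) • v := by
  have h := (((hΓ.differentiableAt hs hp v w).hasFDerivAt.add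
    (((S.metric.differentiableAt hs hp v w).hasFDerivAt.const_mul α).smul
      (S.differentiableAt_xi hs hp).hasFDerivAt)).sub
    (((S.differentiableAt_eta hs hp w).hasFDerivAt.const_mul α).smul_const v)).fderiv
  rw [show (fun q => canonicalNormal α S Γ q v w) = (fun q => Γ q v w)
    + (fun q => α * S.g q v w) • S.xi - fun q => (α * S.eta q w) • v from rfl, h]
  simp only [add_apply, sub_apply, smul_apply, ContinuousLinearMap.smulRight_apply, smul_eq_mul]
  abel

variable [FiniteDimensional ℝ V]

theorem IsAK.canonical_eq (hs : IsOpen s) (hAK : IsAK s S α) (hN : IsNormal s S) :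
    ∀ q ∈ s, ∀ u v, canonical α S Γ q u v = canonicalNormal α S Γ q u v := by
  intro q hq u v
  simp [canonical, canonicalNormal, hAK.hpr_eq_zero hs hN hq]

theorem IsAK.isConnectionOn_canonical (hAK : IsAK s S α) (hs : IsOpen s) (hN : IsNormal s S)
    (hΓ : IsConnectionOn s Γ) : IsConnectionOn s (canonical α S Γ) :=
  hΓ.canonicalNormal.congr fun q hq u v => (hAK.canonical_eq hs hN q hq u v).symm

theorem IsLeviCivitaOn.Rm_canonicalNormal (hΓ : IsLeviCivitaOn s S.g Γ) (hs : IsOpen s)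
    (hAK : IsAK s S α) (hN : IsNormal s S) (hp : p ∈ s) (u v w : V) :
    Rm (canonicalNormal α S Γ) p u v w
      = Rm Γ p u v w + α ^ 2 • (S.g p v w • u - S.g p u w • v) := by
  have hξ (x : V) : fderiv ℝ S.xi p x = α • (x - S.eta p x • S.xi p) - Γ p x (S.xi p) := by
    rw [← hΓ.cov_xi hs hAK hN hp, cov]
    abel
  have hcon := hΓ.1
  simp only [Rm, fderiv_canonicalNormal hs hcon hp, hΓ.isMetricConnOn p hp,
    hΓ.fderiv_eta hs hAK hN hp, hξ]
  simp only [canonicalNormal, hcon.map_add_right hp, hcon.map_sub_right hp,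
    hcon.map_smul_right hp, S.metric.add_right hp, S.metric.sub_right hp,
    S.metric.smul_right hp, S.eta_add hp, S.eta_sub hp, S.eta_smul hp, S.eta_xi p hp,
    ← S.eta_eq_g_xi hp, hΓ.2.1 p hp v u, S.metric.symm hp v u]
  module

theorem IsLeviCivitaOn.Rm_canonicalNormal_xi_left (hΓ : IsLeviCivitaOn s S.g Γ)
    (hs : IsOpen s) (hAK : IsAK s S α) (hN : IsNormal s S) (hp : p ∈ s) (u v : V) :
    Rm (canonicalNormal α S Γ) p (S.xi p) u v = 0 := by
  rw [hΓ.Rm_canonicalNormal hs hAK hN hp, hΓ.Rm_xi_left hs hAK hN hp, S.metric.symm hp (S.xi p),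
    ← S.eta_eq_g_xi hp]
  module

end Canonical

section Equivalences

variable {V : Type*} [NormedAddCommGroup V] [NormedSpace ℝ V] [FiniteDimensional ℝ V]
  {s : Set V} {S : ACM s} {α : ℝ} {Γ : V → V → V → V} (hs : IsOpen s)
  (hAK : IsAK s S α) (hN : IsNormal s S) (hΓ : IsLeviCivitaOn s S.g Γ)
include hs hAK hN hΓ

theorem IsLeviCivitaOn.flatCurv_canonical_iff_constCurvOn :
    FlatCurv s (canonical α S Γ) ↔ ConstCurvOn s S.g Γ (-α ^ 2) := by
  have hcan := hAK.canonical_eq (Γ := Γ) hs hN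
  refine forall₂_congr fun p hp => forall₃_congr fun u v w => ?_
  rw [Rm_congr hs hcan hp, hΓ.Rm_canonicalNormal hs hAK hN hp, add_eq_zero_iff_eq_neg, neg_smul]

/-- Second Bianchi identity with one entry `ξ`: the torsion of `∇̃` makes the three torsion
terms add up to `2α R̃(u,v)w`. -/
theorem IsLeviCivitaOn.flatCurv_canonical_of_parallelCurv
    (hpar : ParallelCurv s (canonical α S Γ)) : FlatCurv s (canonical α S Γ) := by
  intro p hp u v w
  have hcan := hAK.canonical_eq (Γ := Γ) hs hN
  have hcon := hΓ.1.canonicalNormal (α := α) (S := S)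
  have hb := covT3_add_cyclic hcon hs hp (S.xi p) u v w
  simp only [← covT3_congr hs hcan hp, hpar p hp, canonicalNormal_sub_swap hΓ hp, S.eta_xi p hp,
    Rm_sub_left hcon hs hp, Rm_smul_left hcon hs hp, hΓ.Rm_canonicalNormal_xi_left hs hAK hN hp,
    Rm_swap (p := p) _ (S.xi p)] at hb
  rw [Rm_swap v u] at hb
  have h2 : (2 * α) • Rm (canonicalNormal α S Γ) p u v w = 0 := by
    linear_combination (norm := module) hb
  rw [Rm_congr hs hcan hp]
  exact (smul_eq_zero.mp h2).resolve_left (by linarith [hAK.pos])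

end Equivalences

/-- for an α-Kenmotsu (normal) manifold, the following are
equivalent: `∇̃R̃ = 0`; `R̃ = 0`; constant sectional curvature `-α²`; local
symmetry. -/
theorem stmt_11 (n : ℕ) (s : Set (E (2*n+1))) (hs : IsOpen s) (S : ACM s) (α : ℝ)
    (hAK : IsAK s S α) (hN : IsNormal s S)
    (Γ : E (2*n+1) → E (2*n+1) → E (2*n+1) → E (2*n+1))
    (hΓ : IsLeviCivitaOn s S.g Γ) :
    (ParallelCurv s (canonical α S Γ) ↔ FlatCurv s (canonical α S Γ)) ∧
    (FlatCurv s (canonical α S Γ) ↔ ConstCurvOn s S.g Γ (-(α^2))) ∧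
    (ConstCurvOn s S.g Γ (-(α^2)) ↔ LocallySymmetricOn s Γ) :=
  ⟨⟨hΓ.flatCurv_canonical_of_parallelCurv hs hAK hN,
      ParallelCurv.of_flatCurv hs (hAK.isConnectionOn_canonical hs hN hΓ.1)⟩,
    hΓ.flatCurv_canonical_iff_constCurvOn hs hAK hN,
    ⟨LocallySymmetricOn.of_constCurvOn S.metric hs hΓ.1 hΓ.isMetricConnOn,
      hΓ.constCurvOn_of_locallySymmetricOn hs hAK hN⟩⟩

end AKG
end
end
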